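/- arXiv:1601.00440 — 10 statements merged into one kernel-verified Lean document; each statement's English description precedes it below -/
import Mathlib

section
/- For any vectors f, g ∈ ℝⁿ, the identity I_{f+1}(g − E g) + I_{g+1}(f − E f) = E(fg) − fg holds, where E x = (1/n)(∑ᵢ xᵢ)·𝟏 denotes the (uniform) mean vector, fg is the pointwise product, I_x = Iₙ + Θ_x, and Θ_x is the symmetric matrix with (Θ_x)_{ij} = (xᵢ+xⱼ)/(2n) for i ≠ j and diagonal entries chosen so each row sums to zero. -/
open Finset

/-- The symmetric matrix `Θ_x`: off-diagonal entries `(xᵢ+xⱼ)/(2n)`, diagonal chosen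
so that every row sums to zero. -/
noncomputable def Theta (n : ℕ) (x : Fin n → ℝ) : Matrix (Fin n) (Fin n) ℝ :=
  fun i j =>
    if i = j then -(∑ k ∈ Finset.univ.erase i, (x i + x k) / (2 * n))
    else (x i + x j) / (2 * n)

/-- `I_x = Iₙ + Θ_x`. -/
noncomputable def Imat (n : ℕ) (x : Fin n → ℝ) : Matrix (Fin n) (Fin n) ℝ :=
  1 + Theta n x

/-- `E f`: the constant vector whose entries all equal the mean of `f`. -/
noncomputable def meanVec (n : ℕ) (f : Fin n → ℝ) : Fin n → ℝ :=
  fun _ => (∑ i, f i) / n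

/-- The sup norm `‖x‖_∞`. -/
noncomputable def linf (n : ℕ) (x : Fin n → ℝ) : ℝ :=
  sSup (Set.range fun i => |x i|)

/-- The Ky Fan `k`-norm: the sum of the `k` largest absolute values of the entries,
i.e. the maximum of `∑_{i ∈ S} |xᵢ|` over subsets `S` of cardinality `k`. -/
noncomputable def kyFan (n k : ℕ) (x : Fin n → ℝ) : ℝ :=
  sSup ((fun S : Finset (Fin n) => ∑ i ∈ S, |x i|) '' {S | S.card = k})

/-- The dual Ky Fan `k`-norm: `max(‖x‖_∞, ‖x‖₁ / k)`. -/
noncomputable def kyFanDual (n k : ℕ) (x : Fin n → ℝ) : ℝ :=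
  max (linf n x) ((∑ i, |x i|) / k)

/-- A symmetric norm on `ℝⁿ`: a norm invariant under coordinate permutations
and sign changes. -/
structure IsSymmNorm (n : ℕ) (N : (Fin n → ℝ) → ℝ) : Prop where
  add_le : ∀ x y, N (x + y) ≤ N x + N y
  smul : ∀ (c : ℝ) (x), N (c • x) = |c| * N x
  pos : ∀ x, x ≠ 0 → 0 < N x
  perm : ∀ (σ : Equiv.Perm (Fin n)) (x), N (x ∘ σ) = N x
  sign : ∀ (ε x : Fin n → ℝ), (∀ i, ε i = 1 ∨ ε i = -1) → N (ε * x) = N x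

lemma theta_mulVec (n : ℕ) (x v : Fin n → ℝ) (i : Fin n) :
    (Theta n x).mulVec v i = ∑ j, (x i + x j) / (2 * n) * (v j - v i) := by
  have h1 : ∑ j ∈ Finset.univ.erase i, Theta n x i j * v j
      = ∑ j ∈ Finset.univ.erase i, (x i + x j) / (2 * n) * v j :=
    Finset.sum_congr rfl fun j hj => by
      simp [Theta, (Finset.ne_of_mem_erase hj).symm]
  rw [Matrix.mulVec, dotProduct,
      ← Finset.sum_erase_add _ _ (Finset.mem_univ i),
      ← Finset.sum_erase_add _ (fun j => (x i + x j) / (2 * n) * (v j - v i)) (Finset.mem_univ i),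
      h1]
  simp only [Theta, if_pos rfl, mul_add, mul_neg, Finset.sum_add_distrib, Finset.sum_neg_distrib, ← Finset.sum_mul, add_mul, neg_mul]
  simp [mul_add, mul_neg, Finset.sum_add_distrib, ← Finset.sum_mul]
  simp only [mul_sub, Finset.sum_sub_distrib, ← Finset.sum_mul, sub_mul]
  ring

/-- Proposition 2.1: `I_{f+1}(g − Eg) + I_{g+1}(f − Ef) = E(fg) − fg`. -/
theorem stmt_0 (n : ℕ) (hn : 0 < n) (f g : Fin n → ℝ) :
    (Imat n (f + 1)).mulVec (g - meanVec n g) + (Imat n (g + 1)).mulVec (f - meanVec n f)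
      = meanVec n (f * g) - f * g := by
  have hN : (n:ℝ) ≠ 0 := Nat.cast_ne_zero.mpr hn.ne'
  funext i
  simp only [Imat, Matrix.add_mulVec, Matrix.one_mulVec, Pi.add_apply, Pi.sub_apply,
    Pi.mul_apply, Pi.one_apply, meanVec]
  rw [theta_mulVec, theta_mulVec]
  simp only [Pi.add_apply, Pi.sub_apply, Pi.one_apply, meanVec]
  have key : ∀ (a b : Fin n → ℝ) (i : Fin n),
      ∑ j, (a i + 1 + (a j + 1)) / (2 * n) * (b j - (∑ k, b k) / n - (b i - (∑ k, b k) / n))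
        = ((a i + 1) * (∑ j, b j) + (∑ j, a j * b j) + (∑ j, b j)
            - n * (a i + 1) * b i - (∑ j, a j) * b i - n * b i) / (2 * n) := by
    intro a b i
    rw [Finset.sum_congr rfl (fun j _ => by ring :
      ∀ j ∈ Finset.univ, (a i + 1 + (a j + 1)) / (2 * n) * (b j - (∑ k, b k) / n - (b i - (∑ k, b k) / n))
        = ((a i + 1) * b j + a j * b j + b j - (a i + 1) * b i - a j * b i - b i) / (2 * n))]
    rw [← Finset.sum_div]
    congr 1
    simp only [Finset.sum_add_distrib, Finset.sum_sub_distrib, ← Finset.mul_sum,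
      ← Finset.sum_mul, Finset.sum_const, Finset.card_univ, Fintype.card_fin, nsmul_eq_mul]
    ring
  rw [key f g i, key g f i]
  rw [show (∑ j, g j * f j) = ∑ j, f j * g j from Finset.sum_congr rfl fun j _ => mul_comm _ _]
  field_simp
  ring
end

section
/- The extreme points of the unit ball of the dual norm of the Ky Fan k-norm on ℝⁿ (i.e., the norm ‖x‖_{(k)*} = max(‖x‖_∞, ‖x‖₁/k)) are exactly the vectors of the form ∑_{i∈S} ±eᵢ, where S ⊆ {1,…,n} with |S| = k and eᵢ are the standard basis vectors. -/
/-!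
The ball is the cube `[-1, 1]ⁿ` cut by the `ℓ¹`-ball of radius `k`. A `±1`-vector `v` supported
on a `k`-set `S` is the unique maximiser over the ball of `w ↦ ∑_{i ∈ S} vᵢ wᵢ`, hence an exposed
point. Conversely, at an extreme point `x` no perturbation `x ± d` with `d ≠ 0` stays in the ball.
This excludes slack in the `ℓ¹` constraint (it would force every `|xᵢ| = 1`, so `‖x‖₁ = n ≥ k`),
then two coordinates with `|xᵢ| ∈ (0, 1)` (shift mass between them along their signs), and finally
a single one, since `k` is an integer. So every `|xᵢ|` is `0` or `1`, and exactly `k` of them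
are `1`.
-/

open Finset

theorem eq_zero_of_add_mem_of_sub_mem {𝕜 E : Type*} [Field 𝕜] [LinearOrder 𝕜]
    [IsStrictOrderedRing 𝕜] [AddCommGroup E] [Module 𝕜 E] {A : Set E} {x d : E}
    (hx : x ∈ A.extremePoints 𝕜) (hadd : x + d ∈ A) (hsub : x - d ∈ A) : d = 0 := by
  simpa using ((mem_extremePoints.1 hx).2 _ hadd _ hsub (mem_openSegment_add_sub x d)).1

theorem abs_add_eq_of_abs_le {a d : ℝ} (h : |d| ≤ |a|) : |a + d| = |a| + Real.sign a * d := by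
  have hd := abs_le.1 h
  rcases lt_trichotomy a 0 with ha | rfl | ha
  · rw [abs_of_neg ha] at hd
    rw [Real.sign_of_neg ha, abs_of_neg ha, abs_of_nonpos (by linarith)]
    ring
  · simp [abs_nonpos_iff.1 (h.trans abs_zero.le)]
  · rw [abs_of_pos ha] at hd
    rw [Real.sign_of_pos ha, abs_of_pos ha, abs_of_nonneg (by linarith), one_mul]

theorem sum_abs_eq_card_filter_ne_zero {ι : Type*} {s : Finset ι} {x : ι → ℝ}
    (h : ∀ i ∈ s, |x i| = 0 ∨ |x i| = 1) : ∑ i ∈ s, |x i| = #{i ∈ s | x i ≠ 0} := by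
  classical
  rw [natCast_card_filter]
  refine sum_congr rfl fun i hi => ?_
  rcases h i hi with h | h
  · simp [abs_eq_zero.1 h]
  · rw [if_pos (abs_pos.1 (h ▸ one_pos)), h]

theorem sum_mul_le_sum_abs {ι : Type*} {S : Finset ι} {v w : ι → ℝ}
    (h₁ : ∀ i ∈ S, v i = 1 ∨ v i = -1) : ∑ i ∈ S, v i * w i ≤ ∑ i ∈ S, |w i| :=
  sum_le_sum fun i hi => by rcases h₁ i hi with h | h <;> simp [h, le_abs_self, neg_le_abs]

def kyFanDualBall (ι : Type*) [Fintype ι] (k : ℕ) : Set (ι → ℝ) :=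
  {x | (∀ i, |x i| ≤ 1) ∧ ∑ i, |x i| ≤ k}

theorem setOf_kyFanDual_le_one {n k : ℕ} (hk : 1 ≤ k) :
    {x : Fin n → ℝ | kyFanDual n k x ≤ 1} = kyFanDualBall (Fin n) k := by
  ext x
  have hbdd : BddAbove (Set.range fun i => |x i|) := (Set.finite_range _).bddAbove
  simp only [Set.mem_ofPred_eq, kyFanDual, linf, kyFanDualBall, max_le_iff,
    div_le_one (by exact_mod_cast hk : (0 : ℝ) < k)]
  refine and_congr_left fun _ => ⟨fun h i => (le_csSup hbdd ⟨i, rfl⟩).trans h, fun h => ?_⟩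
  exact Real.sSup_le (by rintro _ ⟨i, rfl⟩; exact h i) zero_le_one

namespace kyFanDualBall

variable {ι : Type*} [Fintype ι] {k : ℕ} {x d : ι → ℝ}

theorem add_mem_of_abs_add_le (hcoord : ∀ i, |x i| + |d i| ≤ 1)
    (hsum : ∑ i, |x i| + ∑ i, |d i| ≤ k) : x + d ∈ kyFanDualBall ι k := by
  refine ⟨fun i => (abs_add_le _ _).trans (hcoord i), ?_⟩
  calc ∑ i, |(x + d) i| ≤ ∑ i, (|x i| + |d i|) := sum_le_sum fun i _ => abs_add_le _ _
    _ ≤ k := by rwa [sum_add_distrib]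

theorem add_mem_of_sum_sign_mul_eq_zero (hx : x ∈ kyFanDualBall ι k) (hd : ∀ i, |d i| ≤ |x i|)
    (hcoord : ∀ i, |x i| + |d i| ≤ 1) (hsign : ∑ i, Real.sign (x i) * d i = 0) :
    x + d ∈ kyFanDualBall ι k := by
  refine ⟨fun i => (abs_add_le _ _).trans (hcoord i), ?_⟩
  calc ∑ i, |(x + d) i| = ∑ i, |x i| + ∑ i, Real.sign (x i) * d i := by
        rw [← sum_add_distrib]; exact sum_congr rfl fun i _ => abs_add_eq_of_abs_le (hd i)
    _ ≤ k := by rw [hsign, add_zero]; exact hx.2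

theorem eq_zero_of_abs_add_le (hx : x ∈ (kyFanDualBall ι k).extremePoints ℝ)
    (hcoord : ∀ i, |x i| + |d i| ≤ 1) (hsum : ∑ i, |x i| + ∑ i, |d i| ≤ k) : d = 0 :=
  eq_zero_of_add_mem_of_sub_mem hx (add_mem_of_abs_add_le hcoord hsum) <| by
    rw [sub_eq_add_neg]
    exact add_mem_of_abs_add_le (by simpa using hcoord) (by simpa using hsum)

theorem eq_zero_of_sum_sign_mul_eq_zero (hx : x ∈ (kyFanDualBall ι k).extremePoints ℝ)
    (hd : ∀ i, |d i| ≤ |x i|) (hcoord : ∀ i, |x i| + |d i| ≤ 1)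
    (hsign : ∑ i, Real.sign (x i) * d i = 0) : d = 0 := by
  have hx' := hx.1
  refine eq_zero_of_add_mem_of_sub_mem hx (add_mem_of_sum_sign_mul_eq_zero hx' hd hcoord hsign) ?_
  rw [sub_eq_add_neg]
  exact add_mem_of_sum_sign_mul_eq_zero hx' (by simpa using hd) (by simpa using hcoord)
    (by simpa using hsign)

theorem abs_eq_one_of_sum_abs_lt (hx : x ∈ (kyFanDualBall ι k).extremePoints ℝ)
    (hlt : ∑ i, |x i| < k) (i : ι) : |x i| = 1 := by
  classical
  by_contra hi
  have hi : |x i| < 1 := (hx.1.1 i).lt_of_ne hi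
  obtain ⟨ε, hε, hεi, hεsum⟩ : ∃ ε > 0, |x i| + ε ≤ 1 ∧ ∑ j, |x j| + ε ≤ k :=
    ⟨min (1 - |x i|) (k - ∑ j, |x j|), lt_min (by linarith) (by linarith),
      by linarith [min_le_left (1 - |x i|) (k - ∑ j, |x j|)],
      by linarith [min_le_right (1 - |x i|) (k - ∑ j, |x j|)]⟩
  have hd : (Pi.single i ε : ι → ℝ) = 0 := by
    refine eq_zero_of_abs_add_le hx (fun j => ?_) ?_
    · rcases eq_or_ne j i with rfl | hj
      · simpa [abs_of_pos hε] using hεi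
      · simpa [hj] using hx.1.1 j
    · simpa [Pi.single_apply, apply_ite, abs_of_pos hε] using hεsum
  exact hε.ne' (by simpa using congr_fun hd i)

theorem eq_of_abs_mem_Ioo (hx : x ∈ (kyFanDualBall ι k).extremePoints ℝ) {j m : ι}
    (hj : |x j| ∈ Set.Ioo 0 1) (hm : |x m| ∈ Set.Ioo 0 1) : j = m := by
  classical
  by_contra hjm
  obtain ⟨ε, hε, hεj, hεm⟩ : ∃ ε > 0, ε ≤ min |x j| (1 - |x j|) ∧ ε ≤ min |x m| (1 - |x m|) :=
    ⟨_, lt_min (lt_min hj.1 (by linarith [hj.2])) (lt_min hm.1 (by linarith [hm.2])),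
      min_le_left _ _, min_le_right _ _⟩
  have hsign : ∀ a : ℝ, a ≠ 0 → |Real.sign a| = 1 ∧ Real.sign a * Real.sign a = 1 := fun a ha => by
    rcases Real.sign_apply_eq_of_ne_zero a ha with h | h <;> simp [h]
  obtain ⟨hsj, hsj'⟩ := hsign (x j) (abs_pos.1 hj.1)
  obtain ⟨hsm, hsm'⟩ := hsign (x m) (abs_pos.1 hm.1)
  set d : ι → ℝ := Pi.single j (ε * Real.sign (x j)) - Pi.single m (ε * Real.sign (x m)) with hd
  have hdj : d j = ε * Real.sign (x j) := by simp [hd, hjm]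
  have hdm : d m = -(ε * Real.sign (x m)) := by simp [hd, Ne.symm hjm]
  have hdi : ∀ i, |d i| ≤ min |x i| (1 - |x i|) := by
    intro i
    by_cases hij : i = j
    · subst hij; rwa [hdj, abs_mul, hsj, mul_one, abs_of_pos hε]
    by_cases him : i = m
    · subst him; rwa [hdm, abs_neg, abs_mul, hsm, mul_one, abs_of_pos hε]
    simpa [hd, hij, him] using hx.1.1 i
  have hzero : d = 0 := by
    refine eq_zero_of_sum_sign_mul_eq_zero hx (fun i => (hdi i).trans (min_le_left _ _))
      (fun i => by linarith [(hdi i).trans (min_le_right _ _)]) ?_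
    simp only [hd, Pi.sub_apply, mul_sub, sum_sub_distrib, Pi.single_apply, mul_ite, mul_zero,
      sum_ite_eq', mem_univ, if_true]
    linear_combination ε * hsj' - ε * hsm'
  have := congr_fun hzero j
  rw [hdj, Pi.zero_apply, mul_eq_zero] at this
  exact this.elim hε.ne' fun h => by simp [h] at hsj

theorem exists_finset_of_mem_extremePoints (hk : k ≤ Fintype.card ι)
    (hx : x ∈ (kyFanDualBall ι k).extremePoints ℝ) :
    ∃ S : Finset ι, #S = k ∧ (∀ i ∈ S, x i = 1 ∨ x i = -1) ∧ ∀ i ∉ S, x i = 0 := by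
  classical
  obtain ⟨hle, hsum⟩ := hx.1
  have hsum : ∑ i, |x i| = k := by
    refine hsum.antisymm (not_lt.1 fun hlt => hlt.not_ge ?_)
    simpa [abs_eq_one_of_sum_abs_lt hx hlt] using (Nat.cast_le.2 hk : (k : ℝ) ≤ Fintype.card ι)
  have h01 : ∀ i, |x i| = 0 ∨ |x i| = 1 := by
    intro j
    by_contra! hj
    have hj : |x j| ∈ Set.Ioo 0 1 := ⟨(abs_nonneg _).lt_of_ne' hj.1, (hle j).lt_of_ne hj.2⟩
    have hrest : ∀ i ∈ univ.erase j, |x i| = 0 ∨ |x i| = 1 := fun i hi => by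
      by_contra! h
      exact (mem_erase.1 hi).1
        (eq_of_abs_mem_Ioo hx ⟨(abs_nonneg _).lt_of_ne' h.1, (hle i).lt_of_ne h.2⟩ hj)
    -- `|x j| = k - N` would be an integer strictly between `0` and `1`
    have hsplit := add_sum_erase univ (fun i => |x i|) (mem_univ j)
    rw [hsum, sum_abs_eq_card_filter_ne_zero hrest] at hsplit
    set N := #{i ∈ univ.erase j | x i ≠ 0}
    have hN : (N : ℝ) < k ∧ (k : ℝ) < N + 1 := ⟨by linarith [hj.1], by linarith [hj.2]⟩
    norm_cast at hN
    omega
  refine ⟨({i | x i ≠ 0} : Finset ι), ?_, fun i hi => ?_, fun i hi => by simpa using hi⟩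
  · exact_mod_cast (sum_abs_eq_card_filter_ne_zero fun i _ => h01 i).symm.trans hsum
  · exact (abs_eq zero_le_one).1 ((h01 i).resolve_left (abs_ne_zero.2 (mem_filter.1 hi).2))

section SignedSupport

variable {S : Finset ι} {v w : ι → ℝ}

theorem sum_mul_le (h₁ : ∀ i ∈ S, v i = 1 ∨ v i = -1) (hw : w ∈ kyFanDualBall ι k) :
    ∑ i ∈ S, v i * w i ≤ k :=
  calc ∑ i ∈ S, v i * w i ≤ ∑ i ∈ S, |w i| := sum_mul_le_sum_abs h₁
    _ ≤ ∑ i, |w i| := sum_le_sum_of_subset_of_nonneg (subset_univ S) fun _ _ _ => abs_nonneg _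
    _ ≤ k := hw.2

theorem eq_of_le_sum_mul (hS : #S = k) (h₁ : ∀ i ∈ S, v i = 1 ∨ v i = -1)
    (h₀ : ∀ i ∉ S, v i = 0) (hw : w ∈ kyFanDualBall ι k) (h : k ≤ ∑ i ∈ S, v i * w i) :
    w = v := by
  classical
  have hle : ∀ i ∈ S, v i * w i ≤ 1 := fun i hi => by
    have := abs_le.1 (hw.1 i)
    rcases h₁ i hi with h | h <;> simp [h] <;> linarith
  have hone : ∀ i ∈ S, v i * w i = 1 := (sum_eq_sum_iff_of_le hle).1 <|
    (sum_le_sum hle).antisymm (by simpa [hS] using h)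
  -- the coordinates in `S` already use up the whole `ℓ¹` budget `k`
  have hout : ∀ i ∈ Sᶜ, |w i| = 0 := by
    refine (sum_eq_zero_iff_of_nonneg fun _ _ => abs_nonneg _).1 <|
      le_antisymm ?_ (sum_nonneg fun _ _ => abs_nonneg _)
    linarith [sum_add_sum_compl S fun i => |w i|, sum_mul_le_sum_abs (w := w) h₁, hw.2]
  funext i
  by_cases hi : i ∈ S
  · have := hone i hi
    rcases h₁ i hi with h | h <;> rw [h] at this ⊢ <;> linarith
  · rw [h₀ i hi, ← abs_eq_zero, hout i (mem_compl.2 hi)]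

theorem mem_exposedPoints (hS : #S = k) (h₁ : ∀ i ∈ S, v i = 1 ∨ v i = -1)
    (h₀ : ∀ i ∉ S, v i = 0) : v ∈ (kyFanDualBall ι k).exposedPoints ℝ := by
  have habs : ∀ i ∈ S, |v i| = 1 := fun i hi => by rcases h₁ i hi with h | h <;> simp [h]
  have hv : v ∈ kyFanDualBall ι k := by
    refine ⟨fun i => ?_, le_of_eq ?_⟩
    · by_cases hi : i ∈ S
      · exact (habs i hi).le
      · simp [h₀ i hi]
    · rw [← sum_subset (subset_univ S) fun i _ hi => by rw [h₀ i hi, abs_zero],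
        sum_congr rfl habs, sum_const, hS, nsmul_one]
  have hvv : ∑ i ∈ S, v i * v i = k := by
    rw [sum_congr rfl fun i hi => by rw [← abs_mul_abs_self, habs i hi, one_mul], sum_const, hS,
      nsmul_one]
  refine ⟨hv, ∑ i ∈ S, v i • ContinuousLinearMap.proj i, fun w hw => ?_⟩
  simp only [FunLike.coe_sum, Finset.sum_apply, FunLike.coe_smul, Pi.smul_apply,
    ContinuousLinearMap.proj_apply, smul_eq_mul, hvv]
  exact ⟨sum_mul_le h₁ hw, eq_of_le_sum_mul hS h₁ h₀ hw⟩

end SignedSupport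

end kyFanDualBall

/-- Lemma 2.2: the extreme points of the unit ball of the dual Ky Fan `k`-norm are
exactly the `±1`-vectors supported on a set of cardinality `k`. -/
theorem stmt_1 (n k : ℕ) (hk : 1 ≤ k) (hkn : k ≤ n) :
    Set.extremePoints ℝ {x : Fin n → ℝ | kyFanDual n k x ≤ 1}
      = {v | ∃ S : Finset (Fin n), S.card = k ∧
          (∀ i ∈ S, v i = 1 ∨ v i = -1) ∧ (∀ i ∉ S, v i = 0)} := by
  rw [setOf_kyFanDual_le_one hk]
  ext x
  constructor
  · exact kyFanDualBall.exists_finset_of_mem_extremePoints (by simpa using hkn)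
  · rintro ⟨S, hS, h₁, h₀⟩
    exact exposedPoints_subset_extremePoints (kyFanDualBall.mem_exposedPoints hS h₁ h₀)
end

section
/- If A ∈ Mₙ(ℝ) is real substochastic (all row sums and column sums of |a_{ij}| are at most 1), then ‖Ay‖ ≤ ‖y‖ for every y ∈ ℝⁿ and every symmetric norm ‖·‖ on ℝⁿ. -/
open Finset

/-!
Replacing `A` by `|A|` and `y` by `|y|` can only increase `|(A y)ᵢ|` entrywise, and a symmetric
norm is monotone in the absolute values of the coordinates. A nonnegative substochastic matrix
is dominated entrywise by a doubly stochastic one, which by Birkhoff's theorem is a convex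
combination of permutation matrices; each of these preserves a symmetric norm, and by convexity
of the norm so does their combination.
-/

open scoped Matrix

namespace IsSymmNorm

variable {n : ℕ} {N : (Fin n → ℝ) → ℝ}

lemma update_mul_le (hN : IsSymmNorm n N) (x : Fin n → ℝ) (i : Fin n) {t : ℝ}
    (ht : |t| ≤ 1) : N (Function.update x i (t * x i)) ≤ N x := by
  obtain ⟨ht₁, ht₂⟩ := abs_le.mp ht
  set ε : Fin n → ℝ := fun j => if j = i then -1 else 1
  have hε : N (ε * x) = N x := hN.sign ε x fun j => by by_cases hj : j = i <;> simp [ε, hj]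
  -- `t xᵢ` is the convex combination `(1+t)/2 · xᵢ + (1-t)/2 · (-xᵢ)`.
  have hcomb : Function.update x i (t * x i) = ((1 + t) / 2) • x + ((1 - t) / 2) • (ε * x) := by
    funext j
    by_cases hj : j = i
    · subst hj; simp [ε]; ring
    · simp [ε, hj]; ring
  calc N (Function.update x i (t * x i))
      ≤ N (((1 + t) / 2) • x) + N (((1 - t) / 2) • (ε * x)) := hcomb ▸ hN.add_le _ _
    _ = N x := by
        rw [hN.smul, hN.smul, hε, abs_of_nonneg (by linarith), abs_of_nonneg (by linarith)]
        ring

lemma mono (hN : IsSymmNorm n N) {x z : Fin n → ℝ} (h : ∀ i, |x i| ≤ |z i|) :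
    N x ≤ N z := by
  classical
  suffices ∀ s : Finset (Fin n), N (s.piecewise x z) ≤ N z by simpa using this univ
  intro s
  induction s using Finset.induction_on with
  | empty => simp
  | insert a s ha ih =>
    have hxa : x a = x a / z a * s.piecewise x z a := by
      rw [piecewise_eq_of_notMem _ _ _ ha]
      refine (div_mul_cancel_of_imp fun hz => ?_).symm
      simpa [hz] using h a
    have ht : |x a / z a| ≤ 1 := by
      rw [abs_div]; exact div_le_one_of_le₀ (h a) (abs_nonneg _)
    rw [piecewise_insert, hxa]
    exact (hN.update_mul_le _ a ht).trans ih

lemma eq_of_abs_eq (hN : IsSymmNorm n N) {x z : Fin n → ℝ} (h : ∀ i, |x i| = |z i|) :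
    N x = N z :=
  (hN.mono fun i => (h i).le).antisymm (hN.mono fun i => (h i).ge)

lemma mulVec_le_of_mem_doublyStochastic (hN : IsSymmNorm n N)
    {S : Matrix (Fin n) (Fin n) ℝ} (hS : S ∈ doublyStochastic ℝ (Fin n)) (z : Fin n → ℝ) :
    N (S *ᵥ z) ≤ N z := by
  have hperm : {σ.permMatrix ℝ | σ : Equiv.Perm (Fin n)} ⊆ {M | N (M *ᵥ z) ≤ N z} := by
    rintro _ ⟨σ, rfl⟩
    simp only [Set.mem_ofPred_eq, Matrix.permMatrix_mulVec, hN.perm, le_refl]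
  have hconv : Convex ℝ {M : Matrix (Fin n) (Fin n) ℝ | N (M *ᵥ z) ≤ N z} := by
    intro M₁ h₁ M₂ h₂ a b ha hb hab
    simp only [Set.mem_ofPred_eq, Matrix.add_mulVec, Matrix.smul_mulVec] at h₁ h₂ ⊢
    calc N (a • M₁ *ᵥ z + b • M₂ *ᵥ z)
        ≤ N (a • M₁ *ᵥ z) + N (b • M₂ *ᵥ z) := hN.add_le _ _
      _ = a * N (M₁ *ᵥ z) + b * N (M₂ *ᵥ z) := by
          rw [hN.smul, hN.smul, abs_of_nonneg ha, abs_of_nonneg hb]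
      _ ≤ a * N z + b * N z := by gcongr
      _ = N z := by rw [← add_mul, hab, one_mul]
  refine convexHull_min hperm hconv ?_
  rw [← doublyStochastic_eq_convexHull_permMatrix]
  exact hS

end IsSymmNorm

/-- The witness is `|A| + u vᵀ / c`, where `u`, `v` are the row and column defects of `|A|` and
`c = ∑ u = ∑ v`; if `c = 0` all defects vanish, so the junk value of `/ 0` is harmless. -/
lemma Matrix.exists_mem_doublyStochastic_abs_le {ι : Type*} [Fintype ι] [DecidableEq ι]
    (A : Matrix ι ι ℝ) (hcol : ∀ j, ∑ i, |A i j| ≤ 1) (hrow : ∀ i, ∑ j, |A i j| ≤ 1) :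
    ∃ S ∈ doublyStochastic ℝ ι, ∀ i j, |A i j| ≤ S i j := by
  set u : ι → ℝ := fun i => 1 - ∑ j, |A i j|
  set v : ι → ℝ := fun j => 1 - ∑ i, |A i j|
  set c : ℝ := ∑ i, u i
  have hu : ∀ i, 0 ≤ u i := fun i => sub_nonneg.mpr (hrow i)
  have hv : ∀ j, 0 ≤ v j := fun j => sub_nonneg.mpr (hcol j)
  have hvc : ∑ j, v j = c := by
    simp only [c, u, v, sum_sub_distrib]
    rw [sum_comm]
  have hu₀ : ∀ i, c = 0 → u i = 0 := fun i hc =>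
    (sum_eq_zero_iff_of_nonneg fun i _ => hu i).mp hc i (mem_univ i)
  have hv₀ : ∀ j, c = 0 → v j = 0 := fun j hc =>
    (sum_eq_zero_iff_of_nonneg fun j _ => hv j).mp (hvc.trans hc) j (mem_univ j)
  have hcorr : ∀ i j, 0 ≤ u i * v j / c := fun i j =>
    div_nonneg (mul_nonneg (hu i) (hv j)) (sum_nonneg fun i _ => hu i)
  refine ⟨fun i j => |A i j| + u i * v j / c, mem_doublyStochastic_iff_sum.mpr
    ⟨fun i j => add_nonneg (abs_nonneg _) (hcorr i j), fun i => ?_, fun j => ?_⟩,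
    fun i j => le_add_of_nonneg_right (hcorr i j)⟩
  · rw [sum_add_distrib, ← sum_div, ← mul_sum, hvc, mul_div_cancel_of_imp (hu₀ i)]
    simp [u]
  · rw [sum_add_distrib, ← sum_div, ← sum_mul, mul_div_cancel_left_of_imp (hv₀ j)]
    simp [v]

lemma Matrix.abs_mulVec_apply_le {m ι : Type*} [Fintype ι] {A S : Matrix m ι ℝ}
    (h : ∀ i j, |A i j| ≤ S i j) (y : ι → ℝ) (i : m) :
    |(A *ᵥ y) i| ≤ (S *ᵥ fun j => |y j|) i := by
  simp only [Matrix.mulVec, dotProduct]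
  calc |∑ j, A i j * y j| ≤ ∑ j, |A i j| * |y j| := by
        simpa only [abs_mul] using abs_sum_le_sum_abs (fun j => A i j * y j) univ
    _ ≤ ∑ j, S i j * |y j| := by gcongr with j; exact h i j

/-- Calderón–Mityagin: a real substochastic matrix is a contraction for every
symmetric norm on `ℝⁿ`. -/
theorem stmt_2 (n : ℕ) (A : Matrix (Fin n) (Fin n) ℝ)
    (hcol : ∀ j, ∑ i, |A i j| ≤ 1) (hrow : ∀ i, ∑ j, |A i j| ≤ 1)
    (N : (Fin n → ℝ) → ℝ) (hN : IsSymmNorm n N) (y : Fin n → ℝ) :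
    N (A.mulVec y) ≤ N y := by
  obtain ⟨S, hS, hAS⟩ := A.exists_mem_doublyStochastic_abs_le hcol hrow
  have hdom : ∀ i, |(A *ᵥ y) i| ≤ |(S *ᵥ fun j => |y j|) i| := fun i =>
    (Matrix.abs_mulVec_apply_le hAS y i).trans (le_abs_self _)
  calc N (A *ᵥ y) ≤ N (S *ᵥ fun j => |y j|) := hN.mono hdom
    _ ≤ N fun j => |y j| := hN.mulVec_le_of_mem_doublyStochastic hS _
    _ = N y := hN.eq_of_abs_eq fun i => abs_abs (y i)
end

section
/- For nonnegative vectors x, y ∈ ℝ₊ⁿ, one has ‖x‖ ≤ ‖y‖ for every symmetric norm ‖·‖ on ℝⁿ if and only if the Ky Fan inequalities ∑_{i=1}^k xᵢ↓ ≤ ∑_{i=1}^k yᵢ↓ hold for every k = 1,…,n (i.e., x is weakly majorized by y). -/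
open Finset

/-!
Each Ky Fan `k`-norm is itself a symmetric norm, which gives one direction. Conversely, let `x` be
weakly majorized by `y` and let `c` be any vector. Abel summation against the non-increasing
rearrangement of `|c|` turns the Ky Fan inequalities into `⟪x, c⟫ ≤ ⟪z, c⟫`, where `z` arranges
the entries of `y` in the same order as `|c|` and gives them the signs of `c`. Since this holds
for every `c`, Hahn–Banach puts `x` in the convex hull of the signed permutations of `y`. A
symmetric norm is convex and equals `N y` at each signed permutation of `y`, so `N x ≤ N y`.
-/

section KyFan

variable {n k : ℕ}

lemma kyFan_eq_sup' (hk : k ≤ n) (x : Fin n → ℝ) :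
    kyFan n k x = (powersetCard k (univ : Finset (Fin n))).sup'
      (powersetCard_nonempty.2 (by simpa using hk)) fun S => ∑ i ∈ S, |x i| := by
  rw [kyFan, sup'_eq_csSup_image]
  congr 2
  ext S
  simp [mem_powersetCard]

lemma sum_abs_le_kyFan (hk : k ≤ n) (x : Fin n → ℝ) {S : Finset (Fin n)} (hS : #S = k) :
    ∑ i ∈ S, |x i| ≤ kyFan n k x := by
  rw [kyFan_eq_sup' hk]
  exact le_sup' (fun S => ∑ i ∈ S, |x i|) (mem_powersetCard.2 ⟨subset_univ S, hS⟩)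

lemma kyFan_le (hk : k ≤ n) {x : Fin n → ℝ} {r : ℝ}
    (h : ∀ S : Finset (Fin n), #S = k → ∑ i ∈ S, |x i| ≤ r) : kyFan n k x ≤ r := by
  rw [kyFan_eq_sup' hk]
  exact sup'_le _ _ fun S hS => h S (mem_powersetCard.1 hS).2

lemma sum_abs_comp_le_kyFan (hk : k ≤ n) (x : Fin n → ℝ) {g : Fin k → Fin n}
    (hg : g.Injective) : ∑ j, |x (g j)| ≤ kyFan n k x := by
  have := sum_abs_le_kyFan hk x (S := univ.map ⟨g, hg⟩) (by simp)
  rwa [sum_map] at this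

lemma kyFan_comp_perm (hk : k ≤ n) (x : Fin n → ℝ) (σ : Equiv.Perm (Fin n)) :
    kyFan n k (x ∘ σ) = kyFan n k x := by
  have kyFan_comp_le (z : Fin n → ℝ) (τ : Equiv.Perm (Fin n)) :
      kyFan n k (z ∘ τ) ≤ kyFan n k z :=
    kyFan_le hk fun S hS => by
      have := sum_abs_le_kyFan hk z (S := S.map τ.toEmbedding) (by simpa using hS)
      rwa [sum_map] at this
  refine le_antisymm (kyFan_comp_le x σ) ?_
  simpa [Function.comp_assoc] using kyFan_comp_le (x ∘ σ) σ.symm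

lemma isSymmNorm_kyFan (hk₀ : 1 ≤ k) (hk : k ≤ n) : IsSymmNorm n (kyFan n k) where
  add_le x y := kyFan_le hk fun S hS => calc
    ∑ i ∈ S, |(x + y) i| ≤ ∑ i ∈ S, (|x i| + |y i|) :=
      sum_le_sum fun i _ => abs_add_le _ _
    _ = ∑ i ∈ S, |x i| + ∑ i ∈ S, |y i| := sum_add_distrib
    _ ≤ kyFan n k x + kyFan n k y :=
      add_le_add (sum_abs_le_kyFan hk x hS) (sum_abs_le_kyFan hk y hS)
  smul c x := by
    simp only [kyFan_eq_sup' hk, Pi.smul_apply, smul_eq_mul, abs_mul, ← mul_sum]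
    exact (apply_sup'_eq_sup'_comp _ _ fun a b => mul_max_of_nonneg a b (abs_nonneg c)).symm
  pos x hx := by
    obtain ⟨i, hi⟩ := Function.ne_iff.1 hx
    obtain ⟨S, hiS, hS⟩ :=
      exists_superset_card_eq (s := {i}) (by simpa using hk₀) (by simpa using hk)
    calc 0 < |x i| := abs_pos.2 hi
      _ ≤ ∑ j ∈ S, |x j| :=
        single_le_sum (fun j _ => abs_nonneg (x j)) (hiS (mem_singleton_self i))
      _ ≤ kyFan n k x := sum_abs_le_kyFan hk x hS
  perm σ x := kyFan_comp_perm hk x σ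
  sign ε x hε := by
    have abs_ε (i : Fin n) : |ε i| = 1 := by rcases hε i with h | h <;> simp [h]
    simp only [kyFan_eq_sup' hk, Pi.mul_apply, abs_mul, abs_ε, one_mul]

lemma Fin.le_val_of_strictMono {m : ℕ} {f : Fin k → Fin m} (hf : StrictMono f) (j : Fin k) :
    (j : ℕ) ≤ f j := calc
  (j : ℕ) = #((Iio j).image f) := by rw [card_image_of_injective _ hf.injective, Fin.card_Iio]
  _ ≤ #(Iio (f j)) := card_le_card fun _ h => by
    obtain ⟨a, ha, rfl⟩ := mem_image.1 h
    exact mem_Iio.2 (hf (mem_Iio.1 ha))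
  _ = f j := Fin.card_Iio _

lemma sum_le_sum_castLE_of_antitone (hk : k ≤ n) {v : Fin n → ℝ} (hv : Antitone v)
    {S : Finset (Fin n)} (hS : #S = k) :
    ∑ i ∈ S, v i ≤ ∑ j : Fin k, v (Fin.castLE hk j) := by
  rw [← map_orderEmbOfFin_univ S hS, sum_map]
  exact sum_le_sum fun j _ =>
    hv (Fin.le_def.2 (Fin.le_val_of_strictMono (S.orderEmbOfFin hS).strictMono j))

lemma kyFan_le_sum_castLE_of_antitone (hk : k ≤ n) {v : Fin n → ℝ} (hv : Antitone v)
    (hv₀ : ∀ i, 0 ≤ v i) : kyFan n k v ≤ ∑ j : Fin k, v (Fin.castLE hk j) :=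
  kyFan_le hk fun S hS => by
    rw [sum_congr rfl fun i _ => abs_of_nonneg (hv₀ i)]
    exact sum_le_sum_castLE_of_antitone hk hv hS

end KyFan

section Rearrangement

variable {n : ℕ}

lemma exists_antitone_comp_perm (g : Fin n → ℝ) :
    ∃ σ : Equiv.Perm (Fin n), Antitone (g ∘ σ) :=
  ⟨Tuple.sort (OrderDual.toDual ∘ g), Tuple.monotone_sort (OrderDual.toDual ∘ g)⟩

lemma sum_range_mul_le_of_sum_range_le {m : ℕ} {B U W : ℕ → ℝ}
    (hB : ∀ i, i + 1 < m → B (i + 1) ≤ B i) (hB₀ : 0 ≤ B (m - 1))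
    (hUW : ∀ k ≤ m, ∑ j ∈ range k, U j ≤ ∑ j ∈ range k, W j) :
    ∑ j ∈ range m, B j * U j ≤ ∑ j ∈ range m, B j * W j := by
  have by_parts (V : ℕ → ℝ) := sum_range_by_parts B V m
  simp only [smul_eq_mul] at by_parts
  rw [by_parts, by_parts]
  refine sub_le_sub (mul_le_mul_of_nonneg_left (hUW m le_rfl) hB₀)
    (sum_le_sum fun i hi => ?_)
  have hi := mem_range.1 hi
  exact mul_le_mul_of_nonpos_left (hUW (i + 1) (by omega)) (sub_nonpos.2 (hB i (by omega)))

lemma sum_mul_le_sum_mul_of_sum_castLE_le {b u w : Fin n → ℝ} (hb : Antitone b)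
    (hb₀ : ∀ i, 0 ≤ b i)
    (h : ∀ k (hk : k ≤ n),
      ∑ j : Fin k, u (Fin.castLE hk j) ≤ ∑ j : Fin k, w (Fin.castLE hk j)) :
    ∑ j, b j * u j ≤ ∑ j, b j * w j := by
  let extend (f : Fin n → ℝ) (j : ℕ) : ℝ := if hj : j < n then f ⟨j, hj⟩ else 0
  have sum_range_extend (f : Fin n → ℝ) (k : ℕ) (hk : k ≤ n) :
      ∑ j ∈ range k, extend f j = ∑ j : Fin k, f (Fin.castLE hk j) := by
    rw [← Fin.sum_univ_eq_sum_range]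
    exact sum_congr rfl fun j _ => dif_pos (j.2.trans_le hk)
  have sum_mul_eq (f : Fin n → ℝ) :
      ∑ j, b j * f j = ∑ j ∈ range n, extend b j * extend f j := by
    rw [← Fin.sum_univ_eq_sum_range]
    exact sum_congr rfl fun j _ => by simp only [extend, dif_pos j.2, Fin.eta]
  rw [sum_mul_eq u, sum_mul_eq w]
  refine sum_range_mul_le_of_sum_range_le (fun i hi => ?_) ?_ fun k hk => ?_
  · simp only [extend, dif_pos hi, dif_pos (Nat.lt_of_succ_lt hi)]
    exact hb (Fin.le_def.2 (Nat.le_succ i))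
  · simp only [extend]
    split_ifs
    exacts [hb₀ _, le_rfl]
  · rw [sum_range_extend u k hk, sum_range_extend w k hk]
    exact h k hk

end Rearrangement

lemma mem_convexHull_of_forall_exists_sum_mul_le {ι : Type*} [Fintype ι] {s : Set (ι → ℝ)}
    (hs : s.Finite) {x : ι → ℝ}
    (h : ∀ c : ι → ℝ, ∃ z ∈ s, ∑ i, x i * c i ≤ ∑ i, z i * c i) :
    x ∈ convexHull ℝ s := by
  classical
  have hclosed : IsClosed (convexHull ℝ s) := (hs.isCompact_convexHull (𝕜 := ℝ)).isClosed
  rw [← iInter_halfSpaces_eq (convex_convexHull ℝ s) hclosed, Set.mem_iInter]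
  intro l
  obtain ⟨z, hz, hle⟩ := h fun i => l fun j => if i = j then 1 else 0
  have hl (v : ι → ℝ) : l v = ∑ i, v i * l fun j => if i = j then 1 else 0 :=
    LinearMap.pi_apply_eq_sum_univ (l : (ι → ℝ) →ₗ[ℝ] ℝ) v
  exact ⟨z, subset_convexHull ℝ s hz, by rwa [hl, hl]⟩

section SignedPerm

variable {n : ℕ}

def signedPerm (y : Fin n → ℝ) (p : (Fin n → ℤˣ) × Equiv.Perm (Fin n)) : Fin n → ℝ :=
  fun i => (p.1 i : ℤ) * y (p.2 i)

lemma IsSymmNorm.convexOn {N : (Fin n → ℝ) → ℝ} (hN : IsSymmNorm n N) :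
    ConvexOn ℝ Set.univ N :=
  ⟨convex_univ, fun p _ q _ a b ha hb _ => calc
    N (a • p + b • q) ≤ N (a • p) + N (b • q) := hN.add_le _ _
    _ = a • N p + b • N q := by
      rw [hN.smul, hN.smul, abs_of_nonneg ha, abs_of_nonneg hb, smul_eq_mul, smul_eq_mul]⟩

lemma IsSymmNorm.apply_signedPerm {N : (Fin n → ℝ) → ℝ} (hN : IsSymmNorm n N)
    (y : Fin n → ℝ) (p : (Fin n → ℤˣ) × Equiv.Perm (Fin n)) : N (signedPerm y p) = N y :=
  (hN.sign (fun i => (p.1 i : ℤ)) (y ∘ p.2) fun i => by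
    rcases Int.units_eq_one_or (p.1 i) with h | h <;> simp [h]).trans (hN.perm p.2 y)

lemma exists_signedPerm_sum_mul_le {x y : Fin n → ℝ} (hx : ∀ i, 0 ≤ x i) (hy : ∀ i, 0 ≤ y i)
    (h : ∀ k, 1 ≤ k → k ≤ n → kyFan n k x ≤ kyFan n k y) (c : Fin n → ℝ) :
    ∃ p, ∑ i, x i * c i ≤ ∑ i, signedPerm y p i * c i := by
  obtain ⟨πc, hπc⟩ := exists_antitone_comp_perm fun i => |c i|
  obtain ⟨πy, hπy⟩ := exists_antitone_comp_perm y
  have prefix_le (k : ℕ) (hk : k ≤ n) :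
      ∑ j : Fin k, x (πc (Fin.castLE hk j)) ≤ ∑ j : Fin k, y (πy (Fin.castLE hk j)) := by
    obtain rfl | hk₀ := k.eq_zero_or_pos
    · simp
    calc ∑ j : Fin k, x (πc (Fin.castLE hk j))
        = ∑ j : Fin k, |x (πc (Fin.castLE hk j))| := by simp only [abs_of_nonneg (hx _)]
      _ ≤ kyFan n k x :=
        sum_abs_comp_le_kyFan hk x (πc.injective.comp (Fin.castLE_injective hk))
      _ ≤ kyFan n k y := h k hk₀ hk
      _ = kyFan n k (y ∘ πy) := (kyFan_comp_perm hk y πy).symm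
      _ ≤ _ := kyFan_le_sum_castLE_of_antitone hk hπy fun i => hy _
  refine ⟨(fun i => if 0 ≤ c i then 1 else -1, πc.symm.trans πy), ?_⟩
  calc ∑ i, x i * c i ≤ ∑ i, |c i| * x i := sum_le_sum fun i _ => by
        rw [mul_comm]
        exact mul_le_mul_of_nonneg_right (le_abs_self _) (hx i)
    _ = ∑ j, |c (πc j)| * x (πc j) := (Equiv.sum_comp πc fun i => |c i| * x i).symm
    _ ≤ ∑ j, |c (πc j)| * y (πy j) :=
        sum_mul_le_sum_mul_of_sum_castLE_le hπc (fun _ => abs_nonneg _) prefix_le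
    _ = _ := by
      symm
      rw [← Equiv.sum_comp πc]
      refine sum_congr rfl fun j _ => ?_
      rcases le_or_gt 0 (c (πc j)) with hc | hc
      · simp [signedPerm, hc, abs_of_nonneg hc, mul_comm]
      · simp [signedPerm, hc.not_ge, abs_of_neg hc, mul_comm]

end SignedPerm

/-- Ky Fan's theorem: for nonnegative vectors `x, y`, `N x ≤ N y` for every symmetric
norm `N` iff `x` is weakly majorized by `y` (all Ky Fan `k`-norm inequalities hold). -/
theorem stmt_3 (n : ℕ) (x y : Fin n → ℝ) (hx : ∀ i, 0 ≤ x i) (hy : ∀ i, 0 ≤ y i) :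
    (∀ N : (Fin n → ℝ) → ℝ, IsSymmNorm n N → N x ≤ N y) ↔
      (∀ k, 1 ≤ k → k ≤ n → kyFan n k x ≤ kyFan n k y) := by
  refine ⟨fun hN k hk₀ hk => hN _ (isSymmNorm_kyFan hk₀ hk), fun h N hN => ?_⟩
  have hx_mem : x ∈ convexHull ℝ (Set.range (signedPerm y)) :=
    mem_convexHull_of_forall_exists_sum_mul_le (Set.finite_range _) fun c =>
      let ⟨p, hp⟩ := exists_signedPerm_sum_mul_le hx hy h c
      ⟨_, ⟨p, rfl⟩, hp⟩
  obtain ⟨_, ⟨p, rfl⟩, hle⟩ :=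
    hN.convexOn.exists_ge_of_mem_convexHull (Set.subset_univ _) hx_mem
  exact hle.trans (hN.apply_signedPerm y p).le
end

section
/- For every f ∈ [−1,1]ⁿ and every 1 ≤ k ≤ n, the induced map x ↦ I_{f+1}x + ℝ𝟏 from (ℝⁿ, ‖·‖_{(k)*}) to the quotient space (ℝⁿ, ‖·‖_{(k)*})/ℝ𝟏 has operator norm at most 1. -/
/-!
With `x = f + 1 ∈ [0,2]ⁿ`, subtracting the constant vector `((x / n) ⬝ᵥ v) 𝟏` from `I_x v` replaces
`I_x` by `M = I_x - 𝟏 (x / n)ᵀ`. Writing `a = x / (2n) ∈ [0, 1/n]ⁿ`, the entries are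
`M i j = a i - a j` off the diagonal and `M i i = 1 - ∑ l, (a i + a l)`. Since `|a i - a j|` is
bounded both by `a i + a j` and by `2/n - a i - a j`, every absolute row sum of `M` is at most 1,
and so is every column sum because `|M i j| = |M j i|`. Such a matrix contracts both `‖·‖_∞` and
`‖·‖₁`, hence also `max (‖·‖_∞, ‖·‖₁ / k)`.
-/

open Finset

open Matrix

lemma abs_le_linf {n : ℕ} (x : Fin n → ℝ) (i : Fin n) : |x i| ≤ linf n x :=
  le_ciSup (f := fun i => |x i|) (Set.finite_range _).bddAbove i

lemma linf_nonneg (n : ℕ) (x : Fin n → ℝ) : 0 ≤ linf n x :=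
  Real.iSup_nonneg fun _ => abs_nonneg _

lemma kyFanDual_nonneg (n k : ℕ) (x : Fin n → ℝ) : 0 ≤ kyFanDual n k x :=
  (linf_nonneg n x).trans (le_max_left _ _)

section MulVec

variable {ι : Type*} [Fintype ι] (M : Matrix ι ι ℝ) (v : ι → ℝ)

lemma abs_mulVec_le (i : ι) : |(M *ᵥ v) i| ≤ ∑ j, |M i j| * |v j| :=
  (abs_sum_le_sum_abs (fun j => M i j * v j) univ).trans_eq
    (sum_congr rfl fun _ _ => abs_mul _ _)

lemma sum_abs_mulVec_le (hcol : ∀ j, ∑ i, |M i j| ≤ 1) :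
    ∑ i, |(M *ᵥ v) i| ≤ ∑ j, |v j| :=
  calc ∑ i, |(M *ᵥ v) i| ≤ ∑ i, ∑ j, |M i j| * |v j| := sum_le_sum fun i _ => abs_mulVec_le M v i
    _ = ∑ j, (∑ i, |M i j|) * |v j| := by rw [sum_comm]; simp only [sum_mul]
    _ ≤ ∑ j, |v j| := sum_le_sum fun j _ =>
        mul_le_of_le_one_left (abs_nonneg _) (hcol j)

end MulVec

lemma linf_mulVec_le {n : ℕ} (M : Matrix (Fin n) (Fin n) ℝ) (hrow : ∀ i, ∑ j, |M i j| ≤ 1)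
    (v : Fin n → ℝ) : linf n (M *ᵥ v) ≤ linf n v :=
  Real.iSup_le (fun i =>
    calc |(M *ᵥ v) i| ≤ ∑ j, |M i j| * |v j| := abs_mulVec_le M v i
      _ ≤ ∑ j, |M i j| * linf n v :=
          sum_le_sum fun j _ => mul_le_mul_of_nonneg_left (abs_le_linf v j) (abs_nonneg _)
      _ = (∑ j, |M i j|) * linf n v := (sum_mul _ _ _).symm
      _ ≤ linf n v := mul_le_of_le_one_left (linf_nonneg n v) (hrow i))
    (linf_nonneg n v)

lemma kyFanDual_mulVec_le {n : ℕ} (k : ℕ) (M : Matrix (Fin n) (Fin n) ℝ)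
    (hrow : ∀ i, ∑ j, |M i j| ≤ 1) (hcol : ∀ j, ∑ i, |M i j| ≤ 1) (v : Fin n → ℝ) :
    kyFanDual n k (M *ᵥ v) ≤ kyFanDual n k v :=
  max_le_max (linf_mulVec_le M hrow v)
    (div_le_div_of_nonneg_right (sum_abs_mulVec_le M v hcol) k.cast_nonneg)

lemma abs_one_sub_sum_add_sum_abs_sub_le_one {ι : Type*} [Fintype ι] {a : ι → ℝ} {c : ℝ}
    (ha : ∀ j, a j ∈ Set.Icc 0 c) (hc : Fintype.card ι * c ≤ 1) (i : ι) :
    |1 - ∑ j, (a i + a j)| + ∑ j, |a i - a j| ≤ 1 := by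
  have hle_add : ∑ j, |a i - a j| ≤ ∑ j, (a i + a j) :=
    sum_le_sum fun j _ => abs_sub_le_iff.2 ⟨by linarith [(ha j).1], by linarith [(ha i).1]⟩
  have hle_two_sub : ∑ j, |a i - a j| ≤ ∑ j, (2 * c - (a i + a j)) :=
    sum_le_sum fun j _ => abs_sub_le_iff.2 ⟨by linarith [(ha i).2], by linarith [(ha j).2]⟩
  have hsum : ∑ j, (2 * c - (a i + a j)) ≤ 2 - ∑ j, (a i + a j) := by
    rw [sum_sub_distrib, sum_const, card_univ, nsmul_eq_mul]
    linarith
  rw [← le_sub_iff_add_le, abs_le]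
  constructor <;> linarith

lemma Theta_apply (n : ℕ) (x : Fin n → ℝ) (i j : Fin n) :
    Theta n x i j = (x i + x j) / (2 * n) - if i = j then ∑ l, (x i + x l) / (2 * n) else 0 := by
  unfold Theta
  split_ifs with h
  · subst h
    rw [← add_sum_erase _ _ (mem_univ i)]
    ring
  · ring

noncomputable def centeredImat (n : ℕ) (x : Fin n → ℝ) : Matrix (Fin n) (Fin n) ℝ :=
  Imat n x - vecMulVec 1 ((n : ℝ)⁻¹ • x)

lemma Imat_mulVec_sub_eq (n : ℕ) (x v : Fin n → ℝ) :
    Imat n x *ᵥ v - (((n : ℝ)⁻¹ • x) ⬝ᵥ v) • (fun _ => (1 : ℝ)) = centeredImat n x *ᵥ v := by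
  rw [centeredImat, sub_mulVec, vecMulVec_mulVec, op_smul_eq_smul]
  rfl

lemma centeredImat_apply (n : ℕ) (x : Fin n → ℝ) (i j : Fin n) :
    centeredImat n x i j =
      (if i = j then 1 - ∑ l, (x i / (2 * n) + x l / (2 * n)) else 0)
        + (x i / (2 * n) - x j / (2 * n)) := by
  simp only [centeredImat, Imat, Matrix.sub_apply, Matrix.add_apply, Theta_apply, one_apply,
    vecMulVec_apply, Pi.one_apply, Pi.smul_apply, smul_eq_mul, add_div]
  split_ifs <;> ring

lemma abs_centeredImat_comm (n : ℕ) (x : Fin n → ℝ) (i j : Fin n) :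
    |centeredImat n x i j| = |centeredImat n x j i| := by
  rcases eq_or_ne i j with rfl | h
  · rfl
  · rw [centeredImat_apply, centeredImat_apply, if_neg h, if_neg h.symm, zero_add, zero_add,
      abs_sub_comm]

section CenteredImat

variable {n : ℕ} {x : Fin n → ℝ}

lemma sum_abs_centeredImat_row_le_one (hx : ∀ i, x i ∈ Set.Icc 0 2) (i : Fin n) :
    ∑ j, |centeredImat n x i j| ≤ 1 := by
  set a : Fin n → ℝ := fun l => x l / (2 * n)
  have ha : ∀ l, a l ∈ Set.Icc 0 (n : ℝ)⁻¹ := fun l => by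
    have h2n : (0 : ℝ) ≤ 2 * n := by positivity
    refine ⟨div_nonneg (hx l).1 h2n, ?_⟩
    calc a l ≤ 2 / (2 * n) := div_le_div_of_nonneg_right (hx l).2 h2n
      _ = (n : ℝ)⁻¹ := by ring
  have hc : (Fintype.card (Fin n) : ℝ) * (n : ℝ)⁻¹ ≤ 1 := by
    rw [Fintype.card_fin]
    exact mul_inv_le_one (a := (n : ℝ))
  calc ∑ j, |centeredImat n x i j|
      ≤ ∑ j, ((if i = j then |1 - ∑ l, (a i + a l)| else 0) + |a i - a j|) :=
        sum_le_sum fun j _ => by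
          rw [centeredImat_apply]
          split_ifs
          · exact abs_add_le _ _
          · rw [zero_add, zero_add]
    _ = |1 - ∑ l, (a i + a l)| + ∑ j, |a i - a j| := by
        rw [sum_add_distrib, sum_ite_eq, if_pos (mem_univ i)]
    _ ≤ 1 := abs_one_sub_sum_add_sum_abs_sub_le_one ha hc i

lemma sum_abs_centeredImat_col_le_one (hx : ∀ i, x i ∈ Set.Icc 0 2) (j : Fin n) :
    ∑ i, |centeredImat n x i j| ≤ 1 := by
  simpa only [abs_centeredImat_comm n x _ j] using sum_abs_centeredImat_row_le_one hx j

end CenteredImat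

theorem stmt_4_general (n k : ℕ)
    (f : Fin n → ℝ) (hf : ∀ i, f i ∈ Set.Icc (-1 : ℝ) 1) (v : Fin n → ℝ) :
    ⨅ lam : ℝ, kyFanDual n k ((Imat n (f + 1)).mulVec v - lam • (fun _ => (1 : ℝ)))
      ≤ kyFanDual n k v := by
  have hx : ∀ i, (f + 1) i ∈ Set.Icc (0 : ℝ) 2 := fun i => by
    simp only [Pi.add_apply, Pi.one_apply, Set.mem_Icc]
    constructor <;> linarith [(hf i).1, (hf i).2]
  calc ⨅ lam : ℝ, kyFanDual n k (Imat n (f + 1) *ᵥ v - lam • fun _ => (1 : ℝ))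
      ≤ kyFanDual n k (Imat n (f + 1) *ᵥ v - (((n : ℝ)⁻¹ • (f + 1)) ⬝ᵥ v) • fun _ => (1 : ℝ)) :=
        ciInf_le ⟨0, Set.forall_mem_range.2 fun _ => kyFanDual_nonneg n k _⟩ _
    _ = kyFanDual n k (centeredImat n (f + 1) *ᵥ v) := by rw [Imat_mulVec_sub_eq]
    _ ≤ kyFanDual n k v :=
        kyFanDual_mulVec_le k _ (sum_abs_centeredImat_row_le_one hx)
          (sum_abs_centeredImat_col_le_one hx) v

/-- Proposition 2.3: for `f ∈ [−1,1]ⁿ`, the map `x ↦ I_{f+1}x + ℝ𝟏` is a contraction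
from `(ℝⁿ, dual Ky Fan k-norm)` to the quotient modulo the constants. -/
theorem stmt_4 (n k : ℕ) (hn : 0 < n) (hk : 1 ≤ k) (hkn : k ≤ n)
    (f : Fin n → ℝ) (hf : ∀ i, f i ∈ Set.Icc (-1 : ℝ) 1) (v : Fin n → ℝ) :
    ⨅ lam : ℝ, kyFanDual n k ((Imat n (f + 1)).mulVec v - lam • (fun _ => (1 : ℝ)))
      ≤ kyFanDual n k v :=
  stmt_4_general n k f hf v
end

section
/- For every f ∈ [−1,1]ⁿ and every 1 ≤ k ≤ n, the matrix I_{f+1} restricted to the hyperplane 𝔛₀ = {x ∈ ℝⁿ : ∑ᵢ xᵢ = 0} is a contraction with respect to the Ky Fan k-norm: ‖I_{f+1}x‖_{(k)} ≤ ‖x‖_{(k)} for all x ∈ 𝔛₀. -/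
open Finset

/-!
On `𝔛₀` the matrix `I_{f+1}` agrees with `R = I_{f+1} - (f+1)𝟙ᵀ/n`, whose entries are
`(f j - f i)/(2n)` off the diagonal and `-∑ⱼ (f i + f j)/(2n)` on it. Since `|a - b| + |a + b| ≤ 2`
on `[-1,1]`, every row of `|R|` sums to at most `1`, and `|R|` is symmetric, so its columns do too.
Such a matrix contracts every Ky Fan norm: the sum of `|(R x)ᵢ|` over a `k`-set is at most
`∑ⱼ cⱼ |xⱼ|` with `cⱼ ∈ [0,1]` and `∑ⱼ cⱼ ≤ k`, and such a fractional choice of coordinates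
collects no more than the `k` largest `|xⱼ|`.
-/

open Matrix

lemma abs_sub_add_abs_add_le_two {a b : ℝ} (ha : |a| ≤ 1) (hb : |b| ≤ 1) :
    |a - b| + |a + b| ≤ 2 := by
  rw [abs_le] at ha hb
  rcases abs_cases (a - b) with ⟨_, _⟩ | ⟨_, _⟩ <;>
    rcases abs_cases (a + b) with ⟨_, _⟩ | ⟨_, _⟩ <;> linarith

lemma le_kyFan {n k : ℕ} (x : Fin n → ℝ) {S : Finset (Fin n)} (hS : S.card = k) :
    ∑ i ∈ S, |x i| ≤ kyFan n k x :=
  le_csSup ((Set.toFinite _).image _).bddAbove ⟨S, hS, rfl⟩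

lemma kyFan_le_kyFan {m n k : ℕ} {y : Fin m → ℝ} {x : Fin n → ℝ}
    (h : ∀ S : Finset (Fin m), S.card = k →
      ∃ T : Finset (Fin n), T.card = k ∧ ∑ i ∈ S, |y i| ≤ ∑ i ∈ T, |x i|) :
    kyFan m k y ≤ kyFan n k x := by
  refine Real.sSup_le ?_ (Real.sSup_nonneg ?_)
  · rintro _ ⟨S, hS, rfl⟩
    obtain ⟨T, hT, hle⟩ := h S hS
    exact hle.trans (le_kyFan x hT)
  · rintro _ ⟨T, -, rfl⟩
    exact sum_nonneg fun i _ => abs_nonneg (x i)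

/-- Take `T` maximising `∑ j ∈ T, w j`: its smallest weight `t` separates `T` from its complement,
and `∑ c w ≤ t ∑ c + ∑_T (w - t)`. -/
lemma exists_card_eq_sum_mul_le_sum {ι : Type*} [Fintype ι] [DecidableEq ι] {k : ℕ} (hk : 0 < k)
    (hkι : k ≤ Fintype.card ι) {c w : ι → ℝ} (hc₀ : ∀ j, 0 ≤ c j) (hc₁ : ∀ j, c j ≤ 1)
    (hcs : ∑ j, c j ≤ k) (hw : ∀ j, 0 ≤ w j) :
    ∃ T : Finset ι, T.card = k ∧ ∑ j, c j * w j ≤ ∑ j ∈ T, w j := by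
  obtain ⟨T, hT, hTmax⟩ := (univ.powersetCard k).exists_max_image (fun T => ∑ j ∈ T, w j)
    (powersetCard_nonempty.2 (by simpa using hkι))
  have hTk : T.card = k := (mem_powersetCard.1 hT).2
  obtain ⟨i₀, hi₀, hmin⟩ := T.exists_min_image w (card_pos.1 (hTk ▸ hk))
  set t := w i₀
  have hout : ∀ j ∉ T, w j ≤ t := by
    intro j hj
    have hj' : j ∉ T.erase i₀ := fun h => hj (mem_of_mem_erase h)
    have hswap := hTmax (insert j (T.erase i₀)) (by
      rw [mem_powersetCard, card_insert_of_notMem hj', card_erase_of_mem hi₀]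
      exact ⟨subset_univ _, by omega⟩)
    rw [sum_insert hj', sum_erase_eq_sub hi₀] at hswap
    linarith
  refine ⟨T, hTk, ?_⟩
  calc ∑ j, c j * w j = ∑ j ∈ T, c j * w j + ∑ j ∈ Tᶜ, c j * w j :=
        (sum_add_sum_compl T _).symm
    _ ≤ ∑ j ∈ T, (t * c j + (w j - t)) + ∑ j ∈ Tᶜ, t * c j := by
        refine add_le_add (sum_le_sum fun j hj => ?_) (sum_le_sum fun j hj => ?_)
        · nlinarith [hmin j hj, hc₁ j]
        · nlinarith [hout j (mem_compl.1 hj), hc₀ j]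
    _ = t * ∑ j, c j + (∑ j ∈ T, w j - k * t) := by
        rw [← sum_add_sum_compl T c, sum_add_distrib, sum_sub_distrib, sum_const, hTk,
          nsmul_eq_mul, ← mul_sum, ← mul_sum]
        ring
    _ ≤ ∑ j ∈ T, w j := by nlinarith [hw i₀]

lemma sum_abs_mulVec_le_s5 {m n : Type*} [Fintype n] (A : Matrix m n ℝ) (x : n → ℝ)
    (S : Finset m) : ∑ i ∈ S, |(A *ᵥ x) i| ≤ ∑ j, (∑ i ∈ S, |A i j|) * |x j| :=
  calc ∑ i ∈ S, |(A *ᵥ x) i| ≤ ∑ i ∈ S, ∑ j, |A i j| * |x j| := by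
        gcongr with i
        exact (abs_sum_le_sum_abs _ _).trans_eq (by simp only [abs_mul])
    _ = ∑ j, (∑ i ∈ S, |A i j|) * |x j| := by
        rw [sum_comm]
        simp only [sum_mul]

theorem kyFan_mulVec_le {m n k : ℕ} (hk : 0 < k) (hkn : k ≤ n) (A : Matrix (Fin m) (Fin n) ℝ)
    (hrow : ∀ i, ∑ j, |A i j| ≤ 1) (hcol : ∀ j, ∑ i, |A i j| ≤ 1) (x : Fin n → ℝ) :
    kyFan m k (A *ᵥ x) ≤ kyFan n k x := by
  refine kyFan_le_kyFan fun S hS => ?_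
  obtain ⟨T, hT, hle⟩ := exists_card_eq_sum_mul_le_sum (c := fun j => ∑ i ∈ S, |A i j|)
    hk (by simpa using hkn) (fun j => sum_nonneg fun i _ => abs_nonneg _)
    (fun j => (sum_le_sum_of_subset_of_nonneg (subset_univ S) fun i _ _ => abs_nonneg _).trans
      (hcol j))
    (by
      rw [sum_comm]
      exact (sum_le_sum fun i _ => hrow i).trans (by simp [hS]))
    (fun j => abs_nonneg (x j))
  exact ⟨T, hT, (sum_abs_mulVec_le_s5 A x S).trans hle⟩

noncomputable def reducedImat (n : ℕ) (f : Fin n → ℝ) : Matrix (Fin n) (Fin n) ℝ :=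
  of (fun i j => (f j - f i) / (2 * n)) - diagonal fun i => ∑ j, (f i + f j) / (2 * n)

lemma Imat_add_one_eq (n : ℕ) (f : Fin n → ℝ) :
    Imat n (f + 1) = reducedImat n f + vecMulVec (fun i => (f i + 1) / n) 1 := by
  ext i j
  have hn : (n : ℝ) ≠ 0 := Nat.cast_ne_zero.2 i.pos.ne'
  by_cases h : i = j
  · subst h
    simp only [Imat, Matrix.add_apply, one_apply_eq, Theta, ↓reduceIte, Pi.add_apply,
      Pi.one_apply, ← sum_div, sum_add_distrib, sum_const, mem_univ, card_erase_of_mem, card_univ,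
      Fintype.card_fin, nsmul_eq_mul, Nat.cast_pred i.pos, mul_one, sum_erase_eq_sub,
      reducedImat, vecMulVec, Matrix.sub_apply, of_apply, sub_self, zero_div, diagonal_apply_eq,
      zero_sub]
    field_simp
    ring
  · simp only [Imat, Matrix.add_apply, one_apply_ne h, Theta, h, ↓reduceIte, Pi.add_apply,
      Pi.one_apply, zero_add, reducedImat, vecMulVec, mul_one, Matrix.sub_apply, of_apply,
      diagonal_apply_ne _ h, sub_zero]
    field_simp
    ring

lemma Imat_add_one_mulVec {n : ℕ} (f : Fin n → ℝ) {x : Fin n → ℝ} (hx : ∑ i, x i = 0) :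
    Imat n (f + 1) *ᵥ x = reducedImat n f *ᵥ x := by
  rw [Imat_add_one_eq, add_mulVec, vecMulVec_mulVec, one_dotProduct, hx]
  simp

lemma abs_reducedImat_le {n : ℕ} (f : Fin n → ℝ) (i j : Fin n) :
    |reducedImat n f i j| ≤
      |f i - f j| / (2 * n) + if i = j then |∑ l, (f i + f l) / (2 * n)| else 0 := by
  by_cases h : i = j
  · subst h
    simp [reducedImat]
  · simp [reducedImat, h, abs_div, abs_sub_comm]

lemma sum_abs_reducedImat_le_one {n : ℕ} {f : Fin n → ℝ} (hf : ∀ i, |f i| ≤ 1) (i : Fin n) :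
    ∑ j, |reducedImat n f i j| ≤ 1 := by
  have hn : (0 : ℝ) < n := Nat.cast_pos.2 i.pos
  have h2n : (0 : ℝ) < 2 * n := by positivity
  calc ∑ j, |reducedImat n f i j|
      ≤ ∑ j, |f i - f j| / (2 * n) + |∑ j, (f i + f j) / (2 * n)| := by
        refine (sum_le_sum fun j _ => abs_reducedImat_le f i j).trans_eq ?_
        rw [sum_add_distrib, sum_ite_eq]
        simp
    _ ≤ ∑ j, |f i - f j| / (2 * n) + ∑ j, |f i + f j| / (2 * n) := by
        gcongr
        exact (abs_sum_le_sum_abs _ _).trans_eq (by simp only [abs_div, abs_of_pos h2n])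
    _ = ∑ j, (|f i - f j| + |f i + f j|) / (2 * n) := by
        simp only [add_div, sum_add_distrib]
    _ ≤ ∑ _j : Fin n, (2 : ℝ) / (2 * n) := by
        gcongr with j
        exact abs_sub_add_abs_add_le_two (hf i) (hf j)
    _ = 1 := by
        rw [sum_const, card_univ, Fintype.card_fin, nsmul_eq_mul]
        field_simp

lemma abs_reducedImat_comm {n : ℕ} (f : Fin n → ℝ) (i j : Fin n) :
    |reducedImat n f i j| = |reducedImat n f j i| := by
  by_cases h : i = j
  · rw [h]
  · simp only [reducedImat, Matrix.sub_apply, of_apply, diagonal_apply_ne _ h,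
      diagonal_apply_ne _ (Ne.symm h), sub_zero]
    rw [← neg_sub, neg_div, abs_neg]

theorem stmt_5_general (n k : ℕ) (hk : 1 ≤ k) (hkn : k ≤ n)
    (f x : Fin n → ℝ) (hf : ∀ i, f i ∈ Set.Icc (-1 : ℝ) 1) (hx : ∑ i, x i = 0) :
    kyFan n k ((Imat n (f + 1)).mulVec x) ≤ kyFan n k x := by
  have hf₁ : ∀ i, |f i| ≤ 1 := fun i => abs_le.2 (hf i)
  rw [Imat_add_one_mulVec f hx]
  refine kyFan_mulVec_le hk hkn _ (sum_abs_reducedImat_le_one hf₁) (fun j => ?_) x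
  simpa only [abs_reducedImat_comm f _ j] using sum_abs_reducedImat_le_one hf₁ j

/-- Proposition 2.4: for `f ∈ [−1,1]ⁿ`, `I_{f+1}` is a contraction for the Ky Fan
`k`-norm on the hyperplane of vectors whose coordinates sum to zero. -/
theorem stmt_5 (n k : ℕ) (hn : 0 < n) (hk : 1 ≤ k) (hkn : k ≤ n)
    (f x : Fin n → ℝ) (hf : ∀ i, f i ∈ Set.Icc (-1 : ℝ) 1) (hx : ∑ i, x i = 0) :
    kyFan n k ((Imat n (f + 1)).mulVec x) ≤ kyFan n k x :=
  stmt_5_general n k hk hkn f x hf hx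
end

section
/- For x ∈ [0,2]ⁿ, the matrix L_x = I_x − (1/n) x⊗𝟏 (i.e., (L_x)_{ij} = (I_x)_{ij} − xᵢ/n) satisfies ‖L_xᵀ‖_{1→1} ≤ 1 and ‖L_xᵀ‖_{∞→∞} ≤ 1; equivalently, each row and each column of |L_x| sums to at most 1 (L_x is real substochastic). -/
open Finset

/-- For `x ∈ [0,2]ⁿ`, the matrix `L_x = I_x − (1/n) x ⊗ 𝟏` is real substochastic:
every row and every column of the entrywise absolute values sums to at most `1`
(equivalently, its transpose is a contraction for both the ℓ¹ and ℓ∞ norms). -/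
theorem stmt_10 (n : ℕ) (hn : 0 < n) (x : Fin n → ℝ)
    (hx : ∀ i, x i ∈ Set.Icc (0 : ℝ) 2) :
    (∀ i, ∑ j, |Imat n x i j - x i / n| ≤ 1) ∧
      (∀ j, ∑ i, |Imat n x i j - x i / n| ≤ 1) := by
  have hN : (0:ℝ) < n := by exact_mod_cast hn
  have key : ∀ i, ∑ j, |Imat n x i j - x i / n| ≤ 1 := by
    intro i
    rw [← Finset.sum_erase_add _ _ (Finset.mem_univ i)]
    have hdiag : Imat n x i i - x i / n
        = 1 - (∑ k ∈ Finset.univ.erase i, (x i + x k) / (2 * n)) - x i / n := by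
      simp [Imat, Theta, Matrix.one_apply]
      ring
    have hoff : ∀ j ∈ Finset.univ.erase i,
        |Imat n x i j - x i / n| = |x j - x i| / (2 * n) := by
      intro j hj
      have hji : ¬ (i = j) := fun h => (Finset.mem_erase.mp hj).1 h.symm
      have h1 : Imat n x i j - x i / n = (x j - x i) / (2 * n) := by
        simp [Imat, Theta, Matrix.one_apply, hji]
        field_simp
        ring
      rw [h1, abs_div, abs_of_pos (show (0:ℝ) < 2*n by positivity)]
    rw [Finset.sum_congr rfl hoff, hdiag]
    set S : ℝ := ∑ k ∈ Finset.univ.erase i, (x i + x k) / (2 * n) with hS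
    have hxi := hx i
    have hxinn : 0 ≤ x i / n := div_nonneg hxi.1 hN.le
    have hterm : ∀ j ∈ Finset.univ.erase i,
        |x j - x i| / (2 * n) ≤ (x i + x j) / (2 * n) := by
      intro j _
      have hj := hx j
      have : |x j - x i| ≤ x i + x j := by
        rcases abs_cases (x j - x i) with ⟨h, _⟩ | ⟨h, _⟩ <;>
          simp only [h] <;> [linarith [hj.1, hxi.1]; linarith [hj.1, hxi.1]]
      exact div_le_div_of_nonneg_right this (by positivity) |>.trans_eq rfl
    have hsumS : ∑ j ∈ Finset.univ.erase i, |x j - x i| / (2 * n) ≤ S :=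
      Finset.sum_le_sum hterm
    rcases abs_cases (1 - S - x i / n) with ⟨heq, _⟩ | ⟨heq, _⟩
    · rw [heq]; linarith
    · rw [heq]
      -- need: ∑ |x j - x i|/(2n) + S ≤ 2 - x i / n
      have hcomb : ∑ j ∈ Finset.univ.erase i,
          (|x j - x i| / (2 * n) + (x i + x j) / (2 * n))
          ≤ ((Finset.univ.erase i).card : ℝ) * (4 / (2 * n)) := by
        rw [← nsmul_eq_mul]
        refine Finset.sum_le_card_nsmul _ _ _ fun j _ => ?_
        have hj := hx j
        have h4 : |x j - x i| + (x i + x j) ≤ 4 := by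
          rcases abs_cases (x j - x i) with ⟨h, _⟩ | ⟨h, _⟩ <;>
            simp only [h] <;> linarith [hj.2, hxi.2]
        calc |x j - x i| / (2 * n) + (x i + x j) / (2 * n)
            = (|x j - x i| + (x i + x j)) / (2 * n) := by ring
          _ ≤ 4 / (2 * n) := by gcongr
      have hcard : ((Finset.univ.erase i).card : ℝ) = (n : ℝ) - 1 := by
        rw [Finset.card_erase_of_mem (Finset.mem_univ i), Finset.card_univ,
          Fintype.card_fin]
        rw [Nat.cast_sub hn]; simp
      have hsplit : ∑ j ∈ Finset.univ.erase i,
          (|x j - x i| / (2 * n) + (x i + x j) / (2 * n))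
          = (∑ j ∈ Finset.univ.erase i, |x j - x i| / (2 * n)) + S := by
        rw [hS, ← Finset.sum_add_distrib]
      have hval : ((n : ℝ) - 1) * (4 / (2 * n)) = 2 - 2 / n := by
        field_simp; ring
      have hx2 : x i / n ≤ 2 / n := by
        gcongr
        exact hxi.2
      rw [hcard, hval, hsplit] at hcomb
      linarith
  refine ⟨key, fun j => ?_⟩
  have heq : ∀ i, |Imat n x i j - x i / n| = |Imat n x j i - x j / n| := by
    intro i
    by_cases h : i = j
    · subst h; rfl
    · have h' : ¬ (j = i) := fun hh => h hh.symm
      have e1 : Imat n x i j - x i / n = (x j - x i) / (2 * n) := by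
        simp [Imat, Theta, Matrix.one_apply, h]
        field_simp; ring
      have e2 : Imat n x j i - x j / n = (x i - x j) / (2 * n) := by
        simp [Imat, Theta, Matrix.one_apply, h']
        field_simp; ring
      rw [e1, e2, abs_div, abs_div, abs_sub_comm]
  calc ∑ i, |Imat n x i j - x i / n| = ∑ i, |Imat n x j i - x j / n| :=
        Finset.sum_congr rfl fun i _ => heq i
    _ ≤ 1 := key j
end

section
/- Fix a symmetric norm ‖·‖ on ℝⁿ with dual norm ‖·‖_*, and define ‖A‖_∂ = max{ Tr(Aᵀ ∂f) : ‖f‖_* ≤ 1 } for A ∈ Mₙ(ℝ), where (∂f)_{ij} = (fᵢ−fⱼ)/√(2n). Then for every f ∈ ℝⁿ, ‖f − E f‖ = ‖∂f‖_∂. -/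
open Finset

/-- The derivation `∂f = (f ⊗ 𝟏 − 𝟏 ⊗ f)/√(2n)`, i.e. `(∂f)_{ij} = (fᵢ − fⱼ)/√(2n)`. -/
noncomputable def Dmat (n : ℕ) (f : Fin n → ℝ) : Matrix (Fin n) (Fin n) ℝ :=
  fun i j => (f i - f j) / Real.sqrt (2 * n)

/-- The dual norm of `N`: `‖x‖_* = sup { ⟨x, y⟩ : N y ≤ 1 }`. -/
noncomputable def dualN (n : ℕ) (N : (Fin n → ℝ) → ℝ) (x : Fin n → ℝ) : ℝ :=
  sSup {t | ∃ y, N y ≤ 1 ∧ t = ∑ i, x i * y i}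

/-- The seminorm `‖A‖_∂ = max { Tr(Aᵀ ∂h) : ‖h‖_* ≤ 1 }` on `Mₙ(ℝ)`. -/
noncomputable def dnorm (n : ℕ) (N : (Fin n → ℝ) → ℝ) (A : Matrix (Fin n) (Fin n) ℝ) : ℝ :=
  sSup {t | ∃ h, dualN n N h ≤ 1 ∧ t = ∑ i, ∑ j, A i j * Dmat n h i j}

/-! Expanding the products gives `⟨∂f, ∂h⟩ = ⟨f − E f, h⟩`, so `‖∂f‖_∂` is the supremum of
`⟨f − E f, h⟩` over `‖h‖_* ≤ 1`. By norm duality this supremum is `‖f − E f‖`: it is attained at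
a Hahn–Banach functional that agrees with `‖·‖` at `f − E f` and is dominated by it. Sign
invariance bounds the coordinates on the unit ball, so the suprema defining `‖·‖_*` are finite
(an unbounded `sSup` would be `0`). -/

theorem exists_linearMap_apply_eq_forall_le {E : Type*} [AddCommGroup E] [Module ℝ E]
    {N : E → ℝ} (smul : ∀ (c : ℝ) x, N (c • x) = |c| * N x)
    (add_le : ∀ x y, N (x + y) ≤ N x + N y) (g : E) :
    ∃ φ : E →ₗ[ℝ] ℝ, φ g = N g ∧ ∀ x, φ x ≤ N x := by
  have map_zero : N 0 = 0 := by simpa using smul 0 0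
  have nonneg : 0 ≤ N g := by
    have := add_le g (-g)
    rw [add_neg_cancel, map_zero, ← neg_one_smul ℝ g, smul, abs_neg, abs_one] at this
    linarith
  let φ₀ : E →ₗ.[ℝ] ℝ := LinearPMap.mkSpanSingleton' g (N g) fun c hc => by
    rcases (smul_eq_zero.1 hc : c = 0 ∨ g = 0) with rfl | rfl <;> simp [map_zero]
  obtain ⟨φ, hφ₀, hφN⟩ := exists_extension_of_le_sublinear φ₀ N
    (fun c hc x => by rw [smul, abs_of_pos hc]) add_le (by
      rintro ⟨x, hx⟩
      obtain ⟨c, rfl⟩ := Submodule.mem_span_singleton.1 hx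
      rw [LinearPMap.mkSpanSingleton'_apply, RingHom.id_apply, smul_eq_mul, smul]
      exact mul_le_mul_of_nonneg_right (le_abs_self c) nonneg)
  refine ⟨φ, ?_, hφN⟩
  rw [hφ₀ ⟨g, Submodule.mem_span_singleton_self g⟩]
  exact LinearPMap.mkSpanSingleton'_apply_self _ _ _ _

namespace IsSymmNorm

variable {n : ℕ} {N : (Fin n → ℝ) → ℝ}

theorem map_zero (hN : IsSymmNorm n N) : N 0 = 0 := by
  simpa using hN.smul 0 0

theorem abs_apply_mul_le (hN : IsSymmNorm n N) (y : Fin n → ℝ) (i : Fin n) :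
    |y i| * N (Pi.single i 1) ≤ N y := by
  -- flipping the signs of all coordinates but the `i`-th and adding `y` gives `2 yᵢ eᵢ`
  let ε : Fin n → ℝ := fun j => if j = i then 1 else -1
  have hε : ∀ j, ε j = 1 ∨ ε j = -1 := fun j => by by_cases h : j = i <;> simp [ε, h]
  have hsum : y + ε * y = (2 * y i) • (Pi.single i 1 : Fin n → ℝ) := by
    funext j
    by_cases h : j = i <;> simp [ε, h]; ring
  have := hN.add_le y (ε * y)
  rw [hsum, hN.smul, hN.sign ε y hε, abs_mul, abs_two] at this
  linarith

theorem bddAbove_pairing (hN : IsSymmNorm n N) (x : Fin n → ℝ) :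
    BddAbove {t | ∃ y, N y ≤ 1 ∧ t = ∑ i, x i * y i} := by
  refine ⟨∑ i, |x i| / N (Pi.single i 1), ?_⟩
  rintro t ⟨y, hy, rfl⟩
  refine Finset.sum_le_sum fun i _ => ?_
  have hpos : 0 < N (Pi.single i 1) := hN.pos _ (by simp)
  have hyi : |y i| ≤ 1 / N (Pi.single i 1) :=
    (le_div_iff₀ hpos).2 ((hN.abs_apply_mul_le y i).trans hy)
  calc x i * y i ≤ |x i| * |y i| := (le_abs_self _).trans_eq (abs_mul _ _)
    _ ≤ |x i| * (1 / N (Pi.single i 1)) := mul_le_mul_of_nonneg_left hyi (abs_nonneg _)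
    _ = |x i| / N (Pi.single i 1) := by ring

theorem sum_mul_le_of_dualN_le_one (hN : IsSymmNorm n N) (x : Fin n → ℝ) {h : Fin n → ℝ}
    (hh : dualN n N h ≤ 1) : ∑ i, x i * h i ≤ N x := by
  rcases eq_or_ne x 0 with rfl | hx
  · simp [hN.map_zero]
  have hpos := hN.pos x hx
  have hunit : N ((N x)⁻¹ • x) ≤ 1 := by
    rw [hN.smul, abs_of_pos (inv_pos.2 hpos), inv_mul_cancel₀ hpos.ne']
  have hle : ∑ i, h i * ((N x)⁻¹ • x) i ≤ 1 :=
    (le_csSup (hN.bddAbove_pairing h) ⟨_, hunit, rfl⟩).trans hh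
  have hscale : ∑ i, h i * ((N x)⁻¹ • x) i = (N x)⁻¹ * ∑ i, x i * h i := by
    rw [Finset.mul_sum]
    exact Finset.sum_congr rfl fun i _ => by simp only [Pi.smul_apply, smul_eq_mul]; ring
  rw [hscale, inv_mul_le_iff₀ hpos, mul_one] at hle
  exact hle

theorem exists_dualN_le_one_sum_mul_eq (hN : IsSymmNorm n N) (g : Fin n → ℝ) :
    ∃ h, dualN n N h ≤ 1 ∧ ∑ i, g i * h i = N g := by
  obtain ⟨φ, hφg, hφN⟩ := exists_linearMap_apply_eq_forall_le hN.smul hN.add_le g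
  have hφ : ∀ y, φ y = ∑ i, y i * φ (Pi.single i 1) := fun y => by
    rw [LinearMap.pi_apply_eq_sum_univ φ y]
    exact Finset.sum_congr rfl fun i _ => by
      rw [smul_eq_mul]; congr 2; funext j; simp [Pi.single_apply, eq_comm]
  refine ⟨fun i => φ (Pi.single i 1), ?_, by rw [← hφ, hφg]⟩
  refine csSup_le ⟨0, 0, by simp [hN.map_zero]⟩ ?_
  rintro t ⟨y, hy, rfl⟩
  simp_rw [mul_comm (φ _), ← hφ]
  exact (hφN y).trans hy

theorem isGreatest_pairing (hN : IsSymmNorm n N) (g : Fin n → ℝ) :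
    IsGreatest {t | ∃ h, dualN n N h ≤ 1 ∧ t = ∑ i, g i * h i} (N g) := by
  obtain ⟨h, hh, hgh⟩ := hN.exists_dualN_le_one_sum_mul_eq g
  refine ⟨⟨h, hh, hgh.symm⟩, ?_⟩
  rintro t ⟨h', hh', rfl⟩
  exact hN.sum_mul_le_of_dualN_le_one g hh'

end IsSymmNorm

theorem sum_Dmat_mul_Dmat {n : ℕ} (f h : Fin n → ℝ) :
    ∑ i, ∑ j, Dmat n f i j * Dmat n h i j = ∑ i, (f - meanVec n f) i * h i := by
  rcases n.eq_zero_or_pos with rfl | hn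
  · simp
  have hsqrt : Real.sqrt (2 * n) * Real.sqrt (2 * n) = 2 * n := Real.mul_self_sqrt (by positivity)
  have hexpand : ∑ i, ∑ j, (f i - f j) * (h i - h j)
      = 2 * n * ∑ i, f i * h i - 2 * (∑ i, f i) * ∑ i, h i := by
    simp only [sub_mul, mul_sub, Finset.sum_sub_distrib, ← Finset.mul_sum, ← Finset.sum_mul,
      Finset.sum_const, Finset.card_univ, Fintype.card_fin, nsmul_eq_mul]
    simp_rw [mul_left_comm (f _) (n : ℝ)]
    rw [← Finset.mul_sum]
    ring
  calc ∑ i, ∑ j, Dmat n f i j * Dmat n h i j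
      = (∑ i, ∑ j, (f i - f j) * (h i - h j)) / (2 * n) := by
        simp only [Dmat, div_mul_div_comm, hsqrt, Finset.sum_div]
    _ = ∑ i, (f - meanVec n f) i * h i := by
        rw [hexpand]
        simp only [meanVec, Pi.sub_apply, sub_mul, Finset.sum_sub_distrib, ← Finset.mul_sum]
        field_simp

theorem stmt_14_general (n : ℕ) (N : (Fin n → ℝ) → ℝ) (hN : IsSymmNorm n N)
    (f : Fin n → ℝ) :
    N (f - meanVec n f) = dnorm n N (Dmat n f) := by
  simp only [dnorm, sum_Dmat_mul_Dmat]
  exact (hN.isGreatest_pairing _).csSup_eq.symm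

/-- Proposition 3.2: `‖f − E f‖ = ‖∂f‖_∂` for every symmetric norm. -/
theorem stmt_14 (n : ℕ) (hn : 0 < n) (N : (Fin n → ℝ) → ℝ) (hN : IsSymmNorm n N)
    (f : Fin n → ℝ) :
    N (f - meanVec n f) = dnorm n N (Dmat n f) :=
  stmt_14_general n N hN f
end

section
/- Let 𝓔 be the bilinear form on ℝⁿ defined by 𝓔(f,g) = (1/(2n)) ∑_{i,j} (fᵢ−fⱼ)(gᵢ−gⱼ) (the uniform Dirichlet form). Define ∂₀f = f⊗𝟏 ∈ Mₙ(ℝ) and, via the Cipriani–Sauvageot pre-inner product (c⊗d, a⊗b)_𝓗 = (1/2)(𝓔(c,abd) + 𝓔(cdb,a) − 𝓔(db,ca)), the adjoint satisfies (∂₀*(a⊗b))ᵢ = (1/(2n)) ∑_{j=1}^n (aᵢ − aⱼ)(bᵢ + bⱼ) for all a, b ∈ ℝⁿ and 1 ≤ i ≤ n, i.e., ⟨∂₀*(a⊗b), c⟩ = (a⊗b, c⊗𝟏)_𝓗 for all c. -/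
open Finset

/-- The uniform Dirichlet form `𝓔(f,g) = (1/(2n)) ∑_{i,j} (fᵢ−fⱼ)(gᵢ−gⱼ)`. -/
noncomputable def Ee (n : ℕ) (f g : Fin n → ℝ) : ℝ :=
  (1 / (2 * n)) * ∑ i, ∑ j, (f i - f j) * (g i - g j)

/-- The Cipriani–Sauvageot pre-inner product on simple tensors:
`(c⊗d, a⊗b)_𝓗 = (1/2)(𝓔(c,abd) + 𝓔(cdb,a) − 𝓔(db,ca))`. -/
noncomputable def csInner (n : ℕ) (c d a b : Fin n → ℝ) : ℝ :=
  (1 / 2) * (Ee n c (a * b * d) + Ee n (c * d * b) a - Ee n (d * b) (c * a))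
lemma symm_sum (n : ℕ) (F : Fin n → Fin n → ℝ) :
    ∑ i, ∑ j, F i j = (1/2) * ∑ i, ∑ j, (F i j + F j i) := by
  have h := Finset.sum_comm (s := (univ : Finset (Fin n))) (t := univ) (f := fun i j => F j i)
  simp only [Finset.sum_add_distrib]
  rw [← h]
  ring

/-- Lemma 3.4: the adjoint of `∂₀ : f ↦ f ⊗ 𝟏` with respect to the
Cipriani–Sauvageot pre-inner product is given by
`(∂₀*(a⊗b))ᵢ = (1/(2n)) ∑ⱼ (aᵢ − aⱼ)(bᵢ + bⱼ)`, i.e.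
`⟨∂₀*(a⊗b), c⟩ = (a⊗b, c⊗𝟏)_𝓗` for all `c`. -/
theorem stmt_16 (n : ℕ) (hn : 0 < n) (a b : Fin n → ℝ) (c : Fin n → ℝ) :
    ∑ i, ((1 / (2 * n)) * ∑ j, (a i - a j) * (b i + b j)) * c i
      = csInner n a b c (fun _ => 1) := by
  unfold csInner Ee
  simp only [Pi.mul_apply, mul_one]
  rw [symm_sum n (fun i j => (a i - a j) * (c i * b i - c j * b j)),
      symm_sum n (fun i j => (a i * b i - a j * b j) * (c i - c j)),
      symm_sum n (fun i j => (b i - b j) * (a i * c i - a j * c j))]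
  have hL : ∑ i, ((1 / (2 * (n:ℝ))) * ∑ j, (a i - a j) * (b i + b j)) * c i
      = ∑ i, ∑ j, ((1 / (2 * (n:ℝ))) * ((a i - a j) * (b i + b j)) * c i) := by
    refine Finset.sum_congr rfl fun i _ => ?_
    rw [Finset.mul_sum, Finset.sum_mul]
  rw [hL, symm_sum n (fun i j => ((1 / (2 * (n:ℝ))) * ((a i - a j) * (b i + b j))) * c i)]
  simp only [Finset.mul_sum]
  conv_rhs => rw [← Finset.sum_add_distrib, ← Finset.sum_sub_distrib, Finset.mul_sum]
  refine Finset.sum_congr rfl fun i _ => ?_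
  conv_rhs => rw [← Finset.sum_add_distrib, ← Finset.sum_sub_distrib, Finset.mul_sum]
  refine Finset.sum_congr rfl fun j _ => ?_
  ring
end

section
/- Let Δ₃ be the 3×3 Laplacian matrix with rows (−2, 1, 1), (1, −1, 0), (1, 0, −1), and define L(f) = ‖Δ₃ f‖_∞ on ℝ³. Then L satisfies the Leibniz inequality L(fg) ≤ ‖f‖_∞ L(g) + ‖g‖_∞ L(f) for all f, g ∈ ℝ³ (with fg the pointwise product), but L is not strongly Leibniz: for f = (−0.1, 0.1, −0.2), the inequality L(1/f) ≤ ‖1/f‖_∞² L(f) fails, where 1/f denotes the coordinatewise inverse. -/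
open Finset

/-- The Laplacian `Δ₃` of Section 4. -/
def Delta3 : Matrix (Fin 3) (Fin 3) ℝ :=
  !![-2, 1, 1; 1, -1, 0; 1, 0, -1]

/-- The seminorm `L(f) = ‖Δ₃ f‖_∞` on `ℝ³`. -/
noncomputable def L3 (f : Fin 3 → ℝ) : ℝ :=
  linf 3 (Delta3.mulVec f)

/-!
On `ℝ³` write `u = f₀ - f₁`, `v = f₀ - f₂`, so that `Δ₃ f = (-(u + v), u, v)` and
`2 L(f) ≥ |u| + |v| + |u + v|`. The rows `u, v` of `Δ₃ (f g)` obey the usual two-point product rule.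
The first row `2 f₀ g₀ - f₁ g₁ - f₂ g₂` can be expanded either as
`f₀ (2 g₀ - g₁ - g₂) + g₁ (f₀ - f₁) + g₂ (f₀ - f₂)` or symmetrically with `f` and `g` exchanged;
averaging the two resulting bounds gives exactly `‖f‖_∞ L(g) + ‖g‖_∞ L(f)`.
For the counterexample, `1/f = (-10, 10, -5)`, so `L(1/f) = 25 > 20 = ‖1/f‖_∞² L(f)`.
-/

lemma linf_eq_norm {n : ℕ} (x : Fin n → ℝ) : linf n x = ‖x‖ := by
  apply le_antisymm
  · exact Real.sSup_le (by rintro _ ⟨i, rfl⟩; exact norm_le_pi_norm x i) (norm_nonneg x)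
  · refine (pi_norm_le_iff_of_nonneg (Real.sSup_nonneg ?_)).2 fun i => ?_
    · rintro _ ⟨i, rfl⟩; exact abs_nonneg _
    · exact le_csSup (Set.finite_range _).bddAbove ⟨i, rfl⟩

lemma norm_vecThree_le_iff {a b c r : ℝ} (hr : 0 ≤ r) :
    ‖![a, b, c]‖ ≤ r ↔ |a| ≤ r ∧ |b| ≤ r ∧ |c| ≤ r := by
  simp [pi_norm_le_iff_of_nonneg hr, Fin.forall_fin_succ]

lemma Delta3_mulVec (f : Fin 3 → ℝ) :
    Delta3.mulVec f = ![f 1 + f 2 - 2 * f 0, f 0 - f 1, f 0 - f 2] := by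
  ext i
  fin_cases i <;> simp [Delta3, Matrix.mulVec, dotProduct, Fin.sum_univ_three] <;> ring

lemma L3_eq_norm (f : Fin 3 → ℝ) :
    L3 f = ‖![f 1 + f 2 - 2 * f 0, f 0 - f 1, f 0 - f 2]‖ := by
  rw [L3, linf_eq_norm, Delta3_mulVec]

lemma L3_nonneg (f : Fin 3 → ℝ) : 0 ≤ L3 f := by
  rw [L3_eq_norm]; exact norm_nonneg _

lemma L3_le_iff {f : Fin 3 → ℝ} {r : ℝ} (hr : 0 ≤ r) :
    L3 f ≤ r ↔ |2 * f 0 - f 1 - f 2| ≤ r ∧ |f 0 - f 1| ≤ r ∧ |f 0 - f 2| ≤ r := by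
  rw [L3_eq_norm, norm_vecThree_le_iff hr, ← abs_neg (f 1 + f 2 - 2 * f 0),
    show -(f 1 + f 2 - 2 * f 0) = 2 * f 0 - f 1 - f 2 by ring]

lemma abs_add_abs_add_abs_add_le {u v c : ℝ} (hu : |u| ≤ c) (hv : |v| ≤ c)
    (huv : |u + v| ≤ c) : |u| + |v| + |u + v| ≤ 2 * c := by
  cases abs_cases u <;> cases abs_cases v <;> cases abs_cases (u + v) <;> linarith

lemma abs_add_abs_add_abs_le_two_mul_L3 (f : Fin 3 → ℝ) :
    |f 0 - f 1| + |f 0 - f 2| + |2 * f 0 - f 1 - f 2| ≤ 2 * L3 f := by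
  obtain ⟨h₀, h₁, h₂⟩ := (L3_le_iff (L3_nonneg f)).1 le_rfl
  rw [show 2 * f 0 - f 1 - f 2 = f 0 - f 1 + (f 0 - f 2) by ring] at h₀ ⊢
  exact abs_add_abs_add_abs_add_le h₁ h₂ h₀

lemma abs_mul_sub_mul_le {a b c d F G : ℝ} (ha : |a| ≤ F) (hd : |d| ≤ G) :
    |a * b - c * d| ≤ F * |b - d| + G * |a - c| :=
  calc |a * b - c * d| = |a * (b - d) + d * (a - c)| := by ring_nf
    _ ≤ |a| * |b - d| + |d| * |a - c| := by
      rw [← abs_mul, ← abs_mul]; exact abs_add_le _ _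
    _ ≤ F * |b - d| + G * |a - c| := by gcongr

lemma abs_two_mul_mul_sub_le {f₀ f₁ f₂ g₀ g₁ g₂ F G : ℝ} (hf₀ : |f₀| ≤ F) (hg₁ : |g₁| ≤ G)
    (hg₂ : |g₂| ≤ G) :
    |2 * (f₀ * g₀) - f₁ * g₁ - f₂ * g₂|
      ≤ F * |2 * g₀ - g₁ - g₂| + G * (|f₀ - f₁| + |f₀ - f₂|) :=
  calc |2 * (f₀ * g₀) - f₁ * g₁ - f₂ * g₂|
        = |f₀ * (2 * g₀ - g₁ - g₂) + (g₁ * (f₀ - f₁) + g₂ * (f₀ - f₂))| := by ring_nf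
    _ ≤ |f₀| * |2 * g₀ - g₁ - g₂| + (|g₁| * |f₀ - f₁| + |g₂| * |f₀ - f₂|) := by
      simp only [← abs_mul]
      exact (abs_add_le _ _).trans (add_le_add_right (abs_add_le _ _) _)
    _ ≤ F * |2 * g₀ - g₁ - g₂| + G * (|f₀ - f₁| + |f₀ - f₂|) := by
      rw [mul_add]; gcongr

theorem L3_mul_le (f g : Fin 3 → ℝ) : L3 (f * g) ≤ ‖f‖ * L3 g + ‖g‖ * L3 f := by
  have hf (i : Fin 3) : |f i| ≤ ‖f‖ := norm_le_pi_norm f i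
  have hg (i : Fin 3) : |g i| ≤ ‖g‖ := norm_le_pi_norm g i
  obtain ⟨-, hLf₁, hLf₂⟩ := (L3_le_iff (L3_nonneg f)).1 le_rfl
  obtain ⟨-, hLg₁, hLg₂⟩ := (L3_le_iff (L3_nonneg g)).1 le_rfl
  rw [L3_le_iff (by have := L3_nonneg f; have := L3_nonneg g; positivity)]
  simp only [Pi.mul_apply]
  refine ⟨?_, (abs_mul_sub_mul_le (hf 0) (hg 1)).trans (by gcongr),
    (abs_mul_sub_mul_le (hf 0) (hg 2)).trans (by gcongr)⟩
  have h₁ := abs_two_mul_mul_sub_le (f₁ := f 1) (f₂ := f 2) (g₀ := g 0) (hf 0) (hg 1) (hg 2)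
  have h₂ := abs_two_mul_mul_sub_le (f₁ := g 1) (f₂ := g 2) (g₀ := f 0) (hg 0) (hf 1) (hf 2)
  rw [mul_comm (g 0), mul_comm (g 1), mul_comm (g 2)] at h₂
  linarith [mul_le_mul_of_nonneg_left (abs_add_abs_add_abs_le_two_mul_L3 g) (norm_nonneg f),
    mul_le_mul_of_nonneg_left (abs_add_abs_add_abs_le_two_mul_L3 f) (norm_nonneg g)]

/-- Section 4: `L(f) = ‖Δ₃ f‖_∞` is a Leibniz seminorm on `ℝ³` which is not
strongly Leibniz: the strong Leibniz inequality `L(1/f) ≤ ‖1/f‖_∞² L(f)` fails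
for `f = (−0.1, 0.1, −0.2)` (with `1/f` the coordinatewise inverse). -/
theorem stmt_19 :
    (∀ f g : Fin 3 → ℝ, L3 (f * g) ≤ linf 3 f * L3 g + linf 3 g * L3 f) ∧
      ¬ L3 (![(-0.1 : ℝ), 0.1, -0.2])⁻¹
          ≤ (linf 3 (![(-0.1 : ℝ), 0.1, -0.2])⁻¹) ^ 2 * L3 ![(-0.1 : ℝ), 0.1, -0.2] := by
  refine ⟨fun f g => by simpa only [linf_eq_norm] using L3_mul_le f g, ?_⟩
  have hinv : (![(-0.1 : ℝ), 0.1, -0.2])⁻¹ = ![-10, 10, -5] := by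
    ext i; fin_cases i <;> norm_num
  have hL_inv : 25 ≤ L3 ![-10, 10, -5] := by
    have := abs_add_abs_add_abs_le_two_mul_L3 ![-10, 10, -5]
    norm_num [Matrix.cons_val_two] at this
    linarith
  have hnorm_inv : linf 3 ![-10, 10, -5] ≤ 10 := by
    rw [linf_eq_norm, norm_vecThree_le_iff (by norm_num)]; norm_num
  have hL : L3 ![(-0.1 : ℝ), 0.1, -0.2] ≤ 0.2 := by
    rw [L3_le_iff (by norm_num)]; norm_num [Matrix.cons_val_two]
  rw [hinv, not_le]
  calc (linf 3 ![-10, 10, -5]) ^ 2 * L3 ![(-0.1 : ℝ), 0.1, -0.2]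
      ≤ 10 ^ 2 * 0.2 := by
        gcongr
        · exact L3_nonneg _
        · rw [linf_eq_norm]; exact norm_nonneg _
    _ < 25 := by norm_num
    _ ≤ L3 ![-10, 10, -5] := hL_inv
end
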